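/- arXiv:1802.06021 — 5 statements merged into one kernel-verified Lean document; each statement's English description precedes it below -/
import Mathlib

section
/- Let a, b ≥ 1 and k ≥ 1. If the a-cube Q_a contains k pairwise edge-disjoint symmetric chain decompositions and the b-cube Q_b contains k pairwise edge-disjoint symmetric chain decompositions, then the (a+b)-cube Q_{a+b} contains k pairwise edge-disjoint symmetric chain decompositions. -/
/-- The Hamming weight of a bitstring of length `n`, i.e., its number of 1-bits. -/
def wt {n : ℕ} (x : Fin n → Bool) : ℕ := (Finset.univ.filter fun i => x i = true).card

/-- The `n`-dimensional hypercube: vertices are bitstrings of length `n`, two of which are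
adjacent iff they differ in exactly one position. -/
def cube (n : ℕ) : SimpleGraph (Fin n → Bool) where
  Adj x y := hammingDist x y = 1
  symm := by constructor; intro x y h; rwa [hammingDist_comm]
  loopless := by constructor; intro x h; simp [hammingDist_self] at h
/-- A symmetric chain in the `n`-cube: a path `(x_k, x_{k+1}, …, x_{n−k})` in `cube n`
where `x_i` has Hamming weight `i` for each `k ≤ i ≤ n − k`. -/
def IsSymChain (n : ℕ) (c : List (Fin n → Bool)) : Prop :=
  c ≠ [] ∧ c.Chain' (cube n).Adj ∧
  ∃ k : ℕ, (∀ (i : ℕ) (h : i < c.length), wt (c.get ⟨i, h⟩) = k + i) ∧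
    2 * k + (c.length - 1) = n

/-- A symmetric chain decomposition of the `n`-cube: a collection of symmetric chains
whose vertex sets partition the vertex set. -/
def IsSCD (n : ℕ) (D : Set (List (Fin n → Bool))) : Prop :=
  (∀ c ∈ D, IsSymChain n c) ∧ ∀ x : Fin n → Bool, ∃! c, c ∈ D ∧ x ∈ c

/-- The edges lying on a chain, i.e., the unordered pairs of consecutive entries. -/
def chainEdges {V : Type*} (c : List V) : Set (Sym2 V) :=
  {e | ∃ (i : ℕ) (h : i + 1 < c.length),
    e = s(c.get ⟨i, Nat.lt_of_succ_lt h⟩, c.get ⟨i + 1, h⟩)}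

/-- All edges lying on some chain of the collection `D`. -/
def scdEdges {n : ℕ} (D : Set (List (Fin n → Bool))) : Set (Sym2 (Fin n → Bool)) :=
  ⋃ c ∈ D, chainEdges c

/-- Two chain decompositions are edge-disjoint if no edge lies on a chain of one
and also on a chain of the other. -/
def EdgeDisjointSCD {n : ℕ} (D D' : Set (List (Fin n → Bool))) : Prop :=
  Disjoint (scdEdges D) (scdEdges D')

/-!
For symmetric chains `c` of `Q_a` and `d` of `Q_b`, the grid `c × d` in `Q_{a+b}` splits into
`min |c| |d|` symmetric chains ("hooks"), the classical product step of de Bruijn, Tengbergen and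
Kruyswijk; applied to all pairs of chains it turns SCDs of `Q_a` and `Q_b` into one of `Q_{a+b}`.
Along a hook only one coordinate moves at a time, and it moves along an edge of `c` or of `d`.
So every edge of the product of the `i`-th decompositions is an edge of the `i`-th decomposition
of one factor times a vertex of the other. Edges coming from different `i`, `j` cannot coincide:
moving in the same factor they would give a common edge of two decompositions there, and an
edge moving in one factor keeps the other coordinate fixed, while chain edges are never loops.
-/

open SimpleGraph

section ChainEdges

variable {V W : Type*}

@[simp]
lemma chainEdges_nil : chainEdges ([] : List V) = ∅ := by
  ext; simp [chainEdges]

@[simp]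
lemma chainEdges_singleton (x : V) : chainEdges [x] = ∅ := by
  ext; simp [chainEdges]

lemma chainEdges_cons_cons (x y : V) (l : List V) :
    chainEdges (x :: y :: l) = insert s(x, y) (chainEdges (y :: l)) := by
  ext e
  simp only [chainEdges, Set.mem_insert_iff, Set.mem_ofPred_eq]
  constructor
  · rintro ⟨_ | i, hi, rfl⟩
    · simp
    · exact Or.inr ⟨i, by simpa using hi, by simp⟩
  · rintro (rfl | ⟨i, hi, rfl⟩)
    · exact ⟨0, by simp, by simp⟩
    · exact ⟨i + 1, by simpa using hi, by simp⟩

lemma chainEdges_map (f : V → W) (l : List V) :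
    chainEdges (l.map f) = Sym2.map f '' chainEdges l := by
  induction l using List.twoStepInduction with
  | nil => simp
  | singleton x => simp
  | cons_cons x y l _ ih =>
    rw [List.map_cons, List.map_cons, chainEdges_cons_cons, ← List.map_cons, ih,
      chainEdges_cons_cons, Set.image_insert_eq, Sym2.map_mk]

lemma chainEdges_append_cons (l₁ : List V) (x : V) (l₂ : List V) :
    chainEdges (l₁ ++ x :: l₂) = chainEdges (l₁ ++ [x]) ∪ chainEdges (x :: l₂) := by
  induction l₁ using List.twoStepInduction with
  | nil => simp
  | singleton y => simp [chainEdges_cons_cons]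
  | cons_cons y z l _ ih =>
    simp only [List.cons_append] at ih ⊢
    rw [chainEdges_cons_cons, ih, chainEdges_cons_cons, Set.insert_union]

lemma chainEdges_subset_cons (x : V) (l : List V) : chainEdges l ⊆ chainEdges (x :: l) := by
  cases l with
  | nil => simp
  | cons y l => simp [chainEdges_cons_cons, Set.subset_insert]

lemma chainEdges_subset_append (l₁ l₂ : List V) : chainEdges l₁ ⊆ chainEdges (l₁ ++ l₂) := by
  induction l₁ using List.twoStepInduction with
  | nil => simp
  | singleton y => simp
  | cons_cons y z l _ ih =>
    rw [List.cons_append, List.cons_append, chainEdges_cons_cons, chainEdges_cons_cons,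
      ← List.cons_append]
    exact Set.insert_subset_insert (ih z)

lemma chainEdges_subset_edgeSet {G : SimpleGraph V} {l : List V} (hl : l.IsChain G.Adj) :
    chainEdges l ⊆ G.edgeSet := by
  induction l using List.twoStepInduction with
  | nil => simp
  | singleton y => simp
  | cons_cons y z l _ ih =>
    rw [List.isChain_cons_cons] at hl
    rw [chainEdges_cons_cons, Set.insert_subset_iff]
    exact ⟨hl.1, ih z hl.2⟩

end ChainEdges

section BoxEdges

variable {α β : Type*} {EA EA' : Set (Sym2 α)} {EB EB' : Set (Sym2 β)}

/-- The edges of the Cartesian product of the graphs with edge sets `EA` and `EB`, provided these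
have no loops: one coordinate moves along an edge while the other stays fixed. -/
def boxEdges (EA : Set (Sym2 α)) (EB : Set (Sym2 β)) : Set (Sym2 (α × β)) :=
  {e | e.map Prod.fst ∈ EA ∧ (e.map Prod.snd).IsDiag ∨
    (e.map Prod.fst).IsDiag ∧ e.map Prod.snd ∈ EB}

lemma boxEdges_mono (hA : EA ⊆ EA') (hB : EB ⊆ EB') : boxEdges EA EB ⊆ boxEdges EA' EB' :=
  fun _ he => he.imp (And.imp_left (@hA _)) (And.imp_right (@hB _))

lemma map_prodMk_left_mem_boxEdges {e : Sym2 α} (he : e ∈ EA) (y : β) :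
    e.map (·, y) ∈ boxEdges EA EB := by
  induction e using Sym2.ind
  simp [boxEdges, he]

lemma map_prodMk_right_mem_boxEdges (x : α) {e : Sym2 β} (he : e ∈ EB) :
    e.map (x, ·) ∈ boxEdges EA EB := by
  induction e using Sym2.ind
  simp [boxEdges, he]

lemma disjoint_boxEdges (hA : Disjoint EA EA') (hB : Disjoint EB EB')
    (hA₀ : ∀ e ∈ EA, ¬e.IsDiag) (hB₀ : ∀ e ∈ EB, ¬e.IsDiag) :
    Disjoint (boxEdges EA EB) (boxEdges EA' EB') := by
  refine Set.disjoint_left.2 fun e he he' => ?_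
  rcases he with ⟨h₁, h₂⟩ | ⟨h₁, h₂⟩ <;> rcases he' with ⟨h₁', h₂'⟩ | ⟨h₁', h₂'⟩
  · exact Set.disjoint_left.1 hA h₁ h₁'
  · exact hA₀ _ h₁ h₁'
  · exact hB₀ _ h₂ h₂'
  · exact Set.disjoint_left.1 hB h₂ h₂'

end BoxEdges

section Hooks

variable {α β : Type*}

/-- The hooks partitioning `c ×ˢ d` for `d = e.reverse`, i.e. `e` lists the second chain from the
top down so that both lists are consumed from the head. The `t`-th hook climbs `d` beside `c[t]`
up to the corner `(c[t], e[t])` and then climbs `c` beside `e[t]`. -/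
def hooks : List α → List β → List (List (α × β))
  | [], _ => []
  | _ :: _, [] => []
  | u :: c, v :: e => (e.reverse.map (u, ·) ++ (u, v) :: c.map (·, v)) :: hooks c e

lemma exists_mem_hooks_iff {c : List α} {e : List β} {p : α × β} :
    (∃ h ∈ hooks c e, p ∈ h) ↔ p.1 ∈ c ∧ p.2 ∈ e := by
  fun_induction hooks c e with
  | case1 => simp
  | case2 => simp
  | case3 u c v e ih =>
    obtain ⟨x, y⟩ := p
    simp only [List.mem_cons, exists_eq_or_imp, ih, List.mem_append, List.mem_map,
      List.mem_reverse, Prod.mk.injEq]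
    grind

lemma ne_nil_of_mem_hooks {c : List α} {e : List β} {h : List (α × β)}
    (hh : h ∈ hooks c e) : h ≠ [] := by
  fun_induction hooks c e generalizing h with
  | case1 => simp at hh
  | case2 => simp at hh
  | case3 u c v e ih =>
    rcases List.mem_cons.1 hh with rfl | hh
    · simp
    · exact ih hh

lemma eq_of_mem_hooks {c : List α} {e : List β} (hc : c.Nodup) (he : e.Nodup)
    {h h' : List (α × β)} {p : α × β} (hh : h ∈ hooks c e) (hh' : h' ∈ hooks c e)
    (hp : p ∈ h) (hp' : p ∈ h') : h = h' := by
  fun_induction hooks c e generalizing h h' with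
  | case1 => simp at hh
  | case2 => simp at hh
  | case3 u c v e ih =>
    rw [List.nodup_cons] at hc he
    have not_mem_first (h : List (α × β)) (hh : h ∈ hooks c e) (hp : p ∈ h) :
        p ∉ e.reverse.map (u, ·) ++ (u, v) :: c.map (·, v) := by
      obtain ⟨h₁, h₂⟩ := exists_mem_hooks_iff.1 ⟨h, hh, hp⟩
      simp only [List.mem_append, List.mem_map, List.mem_reverse, List.mem_cons]
      grind
    rw [List.mem_cons] at hh hh'
    rcases hh with rfl | hh <;> rcases hh' with rfl | hh'
    · rfl
    · exact absurd hp (not_mem_first h' hh' hp')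
    · exact absurd hp' (not_mem_first h hh hp)
    · exact ih hc.2 he.2 hh hh' hp hp'

lemma isChain_of_mem_hooks {G : SimpleGraph α} {H : SimpleGraph β} {c : List α} {e : List β}
    (hc : c.IsChain G.Adj) (he : e.reverse.IsChain H.Adj) {h : List (α × β)}
    (hh : h ∈ hooks c e) : h.IsChain (G □ H).Adj := by
  fun_induction hooks c e generalizing h with
  | case1 => simp at hh
  | case2 => simp at hh
  | case3 u c v e ih =>
    rw [List.reverse_cons] at he
    rcases List.mem_cons.1 hh with rfl | hh
    · have hrow : (e.reverse.map (u, ·) ++ [(u, v)]).IsChain (G □ H).Adj := by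
        simpa using List.isChain_map_of_isChain (u, ·) (fun _ _ => boxProd_adj_right.2) he
      have hcol : ((u, v) :: c.map (·, v)).IsChain (G □ H).Adj := by
        simpa using List.isChain_map_of_isChain (·, v) (fun _ _ => boxProd_adj_left.2) hc
      simpa using hrow.append_overlap hcol (List.cons_ne_nil _ _)
    · exact ih hc.tail he.left_of_append hh

lemma map_add_eq_range'_of_mem_hooks {f : α → ℕ} {g : β → ℕ} {c : List α} {e : List β}
    {kc ke : ℕ} (hc : c.map f = List.range' kc c.length)
    (he : e.reverse.map g = List.range' ke e.length) {h : List (α × β)} (hh : h ∈ hooks c e) :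
    ∃ k, h.map (fun p => f p.1 + g p.2) = List.range' k h.length ∧
      2 * k + h.length + 1 = 2 * (kc + ke) + c.length + e.length := by
  fun_induction hooks c e generalizing h kc with
  | case1 => simp at hh
  | case2 => simp at hh
  | case3 u c v e ih =>
    rw [List.map_cons, List.length_cons, List.range'_succ, List.cons.injEq] at hc
    obtain ⟨hu, hc⟩ := hc
    rw [List.reverse_cons, List.length_cons] at he
    obtain ⟨he', hv⟩ :=
      List.append_inj' ((List.map_append ..).symm.trans (he.trans List.range'_concat)) (by simp)
    rw [List.map_singleton, List.singleton_inj, one_mul] at hv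
    rcases List.mem_cons.1 hh with rfl | hh
    · have hrow : ((e.reverse ++ [v]).map (u, ·)).map (fun p => f p.1 + g p.2) =
          List.range' (kc + ke) (e.length + 1) := by
        rw [← hu, ← List.map_add_range', ← he, List.map_map, List.map_map]
        rfl
      have hcol : (c.map (·, v)).map (fun p => f p.1 + g p.2) =
          List.range' (kc + ke + (e.length + 1)) c.length := by
        rw [show kc + ke + (e.length + 1) = g v + (kc + 1) by omega, ← List.map_add_range', ← hc,
          List.map_map, List.map_map]
        simp only [Function.comp_def, add_comm]
      have hhook : e.reverse.map (u, ·) ++ (u, v) :: c.map (·, v) =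
          (e.reverse ++ [v]).map (u, ·) ++ c.map (·, v) := by
        simp
      refine ⟨kc + ke, ?_, ?_⟩
      · rw [hhook, List.map_append, hrow, hcol, List.range'_append_1]
        simp only [List.length_append, List.length_map, List.length_reverse,
          List.length_singleton]
      · simp only [List.length_append, List.length_map, List.length_reverse, List.length_cons]
        omega
    · obtain ⟨k, hk, hlen⟩ := ih hc he' hh
      exact ⟨k, hk, by rw [List.length_cons, List.length_cons]; omega⟩

lemma chainEdges_subset_boxEdges_of_mem_hooks {c : List α} {e : List β} {h : List (α × β)}
    (hh : h ∈ hooks c e) : chainEdges h ⊆ boxEdges (chainEdges c) (chainEdges e.reverse) := by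
  fun_induction hooks c e generalizing h with
  | case1 => simp at hh
  | case2 => simp at hh
  | case3 u c v e ih =>
    rw [List.reverse_cons]
    rcases List.mem_cons.1 hh with rfl | hh
    · have hrow : e.reverse.map (u, ·) ++ [(u, v)] = (e.reverse ++ [v]).map (u, ·) := by simp
      have hcol : (u, v) :: c.map (·, v) = (u :: c).map (·, v) := rfl
      rw [chainEdges_append_cons, hrow, hcol, chainEdges_map, chainEdges_map,
        Set.union_subset_iff, Set.image_subset_iff, Set.image_subset_iff]
      exact ⟨fun _ he => map_prodMk_right_mem_boxEdges u he,
        fun _ hc => map_prodMk_left_mem_boxEdges hc v⟩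
    · exact (ih hh).trans
        (boxEdges_mono (chainEdges_subset_cons u c) (chainEdges_subset_append _ _))

end Hooks

section Cube

variable {a b n : ℕ}

lemma wt_append (u : Fin a → Bool) (v : Fin b → Bool) : wt (Fin.append u v) = wt u + wt v := by
  simp only [wt, Finset.card_filter, Fin.sum_univ_add, Fin.append_left, Fin.append_right]

lemma hammingDist_append (u u' : Fin a → Bool) (v v' : Fin b → Bool) :
    hammingDist (Fin.append u v) (Fin.append u' v') = hammingDist u u' + hammingDist v v' := by
  simp only [hammingDist, Finset.card_filter, Fin.sum_univ_add, Fin.append_left, Fin.append_right]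

lemma cube_adj_appendEquiv {p q : (Fin a → Bool) × (Fin b → Bool)}
    (h : (cube a □ cube b).Adj p q) :
    (cube (a + b)).Adj (Fin.appendEquiv a b p) (Fin.appendEquiv a b q) := by
  change hammingDist (Fin.append p.1 p.2) (Fin.append q.1 q.2) = 1
  rw [hammingDist_append]
  rcases boxProd_adj.1 h with ⟨h, h'⟩ | ⟨h, h'⟩
  · rw [h', hammingDist_self, add_zero]; exact h
  · rw [h', hammingDist_self, zero_add]; exact h

lemma isSymChain_iff {l : List (Fin n → Bool)} :
    IsSymChain n l ↔ l ≠ [] ∧ l.IsChain (cube n).Adj ∧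
      ∃ k, l.map wt = List.range' k l.length ∧ 2 * k + (l.length - 1) = n := by
  have hwt (k : ℕ) : l.map wt = List.range' k l.length ↔
      ∀ (i : ℕ) (h : i < l.length), wt (l.get ⟨i, h⟩) = k + i := by
    simp [List.ext_getElem_iff, List.getElem_range']
  simp only [IsSymChain, hwt]
  rfl

lemma IsSymChain.nodup {l : List (Fin n → Bool)} (hl : IsSymChain n l) : l.Nodup := by
  obtain ⟨-, -, k, hk, -⟩ := isSymChain_iff.1 hl
  exact List.Nodup.of_map wt (hk ▸ List.nodup_range')

end Cube

section ProductSCD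

variable {a b : ℕ}

def productSCD (DA : Set (List (Fin a → Bool))) (DB : Set (List (Fin b → Bool))) :
    Set (List (Fin (a + b) → Bool)) :=
  {l | ∃ c ∈ DA, ∃ d ∈ DB, ∃ h ∈ hooks c d.reverse, h.map (Fin.appendEquiv a b) = l}

lemma isSymChain_map_appendEquiv_of_mem_hooks {c : List (Fin a → Bool)}
    {d : List (Fin b → Bool)} (hc : IsSymChain a c) (hd : IsSymChain b d)
    {h : List ((Fin a → Bool) × (Fin b → Bool))} (hh : h ∈ hooks c d.reverse) :
    IsSymChain (a + b) (h.map (Fin.appendEquiv a b)) := by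
  obtain ⟨hc₀, hcc, kc, hcw, hca⟩ := isSymChain_iff.1 hc
  obtain ⟨hd₀, hdc, kd, hdw, hdb⟩ := isSymChain_iff.1 hd
  obtain ⟨k, hk, hlen⟩ :=
    map_add_eq_range'_of_mem_hooks hcw (by rwa [List.reverse_reverse, List.length_reverse]) hh
  refine isSymChain_iff.2 ⟨by simpa using ne_nil_of_mem_hooks hh,
    List.isChain_map_of_isChain (Fin.appendEquiv a b) (fun _ _ => cube_adj_appendEquiv)
      (isChain_of_mem_hooks hcc (by rwa [List.reverse_reverse]) hh), k, ?_, ?_⟩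
  · have hwt : wt ∘ Fin.appendEquiv a b = fun p => wt p.1 + wt p.2 :=
      funext fun p => wt_append p.1 p.2
    rwa [List.map_map, hwt, List.length_map]
  · have := List.length_pos_iff.2 hc₀
    have := List.length_pos_iff.2 hd₀
    have := List.length_pos_iff.2 (ne_nil_of_mem_hooks hh)
    simp only [List.length_map, List.length_reverse] at hlen ⊢
    omega

lemma isSCD_productSCD {DA : Set (List (Fin a → Bool))} {DB : Set (List (Fin b → Bool))}
    (hA : IsSCD a DA) (hB : IsSCD b DB) : IsSCD (a + b) (productSCD DA DB) := by
  refine ⟨?_, fun x => ?_⟩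
  · rintro _ ⟨c, hc, d, hd, h, hh, rfl⟩
    exact isSymChain_map_appendEquiv_of_mem_hooks (hA.1 c hc) (hB.1 d hd) hh
  obtain ⟨p, rfl⟩ := (Fin.appendEquiv a b).surjective x
  obtain ⟨c, ⟨hc, hpc⟩, hc_unique⟩ := hA.2 p.1
  obtain ⟨d, ⟨hd, hpd⟩, hd_unique⟩ := hB.2 p.2
  obtain ⟨h, hh, hph⟩ := exists_mem_hooks_iff.2 ⟨hpc, List.mem_reverse.2 hpd⟩
  refine ⟨h.map (Fin.appendEquiv a b),
    ⟨⟨c, hc, d, hd, h, hh, rfl⟩, List.mem_map_of_mem hph⟩, ?_⟩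
  rintro _ ⟨⟨c', hc', d', hd', h', hh', rfl⟩, hx⟩
  rw [List.mem_map_of_injective (Fin.appendEquiv a b).injective] at hx
  obtain ⟨hpc', hpd'⟩ := exists_mem_hooks_iff.1 ⟨h', hh', hx⟩
  obtain rfl := hc_unique c' ⟨hc', hpc'⟩
  obtain rfl := hd_unique d' ⟨hd', List.mem_reverse.1 hpd'⟩
  rw [eq_of_mem_hooks (hA.1 _ hc').nodup (List.nodup_reverse.2 (hB.1 _ hd').nodup)
    hh' hh hx hph]

lemma scdEdges_productSCD_subset (DA : Set (List (Fin a → Bool)))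
    (DB : Set (List (Fin b → Bool))) :
    scdEdges (productSCD DA DB) ⊆
      Sym2.map (Fin.appendEquiv a b) '' boxEdges (scdEdges DA) (scdEdges DB) := by
  intro e he
  simp only [scdEdges, Set.mem_iUnion] at he
  obtain ⟨_, ⟨c, hc, d, hd, h, hh, rfl⟩, he⟩ := he
  rw [chainEdges_map] at he
  obtain ⟨e', he', rfl⟩ := he
  refine ⟨e', boxEdges_mono ?_ ?_ (chainEdges_subset_boxEdges_of_mem_hooks hh he'), rfl⟩
  · exact Set.subset_biUnion_of_mem hc
  · rw [List.reverse_reverse]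
    exact Set.subset_biUnion_of_mem hd

lemma IsSCD.not_isDiag_of_mem_scdEdges {n : ℕ} {D : Set (List (Fin n → Bool))}
    (hD : IsSCD n D) {e : Sym2 (Fin n → Bool)} (he : e ∈ scdEdges D) : ¬e.IsDiag := by
  simp only [scdEdges, Set.mem_iUnion₂] at he
  obtain ⟨c, hc, he⟩ := he
  exact (cube n).not_isDiag_of_mem_edgeSet (chainEdges_subset_edgeSet (hD.1 c hc).2.1 he)

lemma edgeDisjointSCD_productSCD {DA DA' : Set (List (Fin a → Bool))}
    {DB DB' : Set (List (Fin b → Bool))} (hA : IsSCD a DA) (hB : IsSCD b DB)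
    (hdA : EdgeDisjointSCD DA DA') (hdB : EdgeDisjointSCD DB DB') :
    EdgeDisjointSCD (productSCD DA DB) (productSCD DA' DB') := by
  have hbox := disjoint_boxEdges hdA hdB (fun _ => hA.not_isDiag_of_mem_scdEdges)
    (fun _ => hB.not_isDiag_of_mem_scdEdges)
  rw [← Set.disjoint_image_iff (Sym2.map.injective (Fin.appendEquiv a b).injective)] at hbox
  exact hbox.mono (scdEdges_productSCD_subset DA DB) (scdEdges_productSCD_subset DA' DB')

end ProductSCD

theorem scd_product_general (a b k : ℕ)
    (hA : ∃ D : Fin k → Set (List (Fin a → Bool)),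
      (∀ i, IsSCD a (D i)) ∧ ∀ i j, i ≠ j → EdgeDisjointSCD (D i) (D j))
    (hB : ∃ D : Fin k → Set (List (Fin b → Bool)),
      (∀ i, IsSCD b (D i)) ∧ ∀ i j, i ≠ j → EdgeDisjointSCD (D i) (D j)) :
    ∃ D : Fin k → Set (List (Fin (a + b) → Bool)),
      (∀ i, IsSCD (a + b) (D i)) ∧ ∀ i j, i ≠ j → EdgeDisjointSCD (D i) (D j) := by
  obtain ⟨DA, hDA, hDA_disj⟩ := hA
  obtain ⟨DB, hDB, hDB_disj⟩ := hB
  exact ⟨fun i => productSCD (DA i) (DB i), fun i => isSCD_productSCD (hDA i) (hDB i),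
    fun i j hij => edgeDisjointSCD_productSCD (hDA i) (hDB i) (hDA_disj i j hij)
      (hDB_disj i j hij)⟩

/-- If the `a`-cube and the `b`-cube each contain `k` pairwise edge-disjoint symmetric chain
decompositions, then the `(a+b)`-cube contains `k` pairwise edge-disjoint symmetric chain
decompositions. -/
theorem scd_product (a b k : ℕ) (ha : 1 ≤ a) (hb : 1 ≤ b) (hk : 1 ≤ k)
    (hA : ∃ D : Fin k → Set (List (Fin a → Bool)),
      (∀ i, IsSCD a (D i)) ∧ ∀ i j, i ≠ j → EdgeDisjointSCD (D i) (D j))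
    (hB : ∃ D : Fin k → Set (List (Fin b → Bool)),
      (∀ i, IsSCD b (D i)) ∧ ∀ i j, i ≠ j → EdgeDisjointSCD (D i) (D j)) :
    ∃ D : Fin k → Set (List (Fin (a + b) → Bool)),
      (∀ i, IsSCD (a + b) (D i)) ∧ ∀ i j, i ≠ j → EdgeDisjointSCD (D i) (D j) :=
  scd_product_general a b k hA hB
end

section
/- For every integer n ≥ 1, any family of pairwise edge-disjoint symmetric chain decompositions of the n-cube Q_n has at most ⌊n/2⌋ + 1 members. -/
/-! The vertex `x` of weight `⌊(n-1)/2⌋` lies strictly below the middle level, so on the chain of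
any SCD that contains it, `x` is followed by an upper neighbour. The edge to that neighbour flips
one of the `n - ⌊(n-1)/2⌋ = ⌊n/2⌋ + 1` zero bits of `x`, and edge-disjoint SCDs must flip
distinct bits. -/

open Finset

lemma wt_mono {n : ℕ} {x y : Fin n → Bool} (h : x ≤ y) : wt x ≤ wt y :=
  card_le_card fun i hi => by
    simp only [mem_filter, mem_univ, true_and] at hi ⊢
    exact Bool.le_iff_imp.mp (h i) hi

lemma card_filter_eq_false {n : ℕ} (x : Fin n → Bool) : #{j | x j = false} = n - wt x := by
  have := card_filter_add_card_filter_not (s := univ) (fun j => x j = true)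
  simp only [card_univ, Fintype.card_fin, Bool.not_eq_true] at this
  rw [wt]
  omega

lemma exists_wt_eq {n k : ℕ} (hk : k ≤ n) : ∃ x : Fin n → Bool, wt x = k :=
  ⟨fun i => decide (i.val < k), by simp [wt, Fin.card_filter_val_lt, hk]⟩

lemma exists_eq_update_true_of_cube_adj {n : ℕ} {x y : Fin n → Bool} (hxy : (cube n).Adj x y)
    (hwt : wt y = wt x + 1) : ∃ j, x j = false ∧ y = Function.update x j true := by
  obtain ⟨j, hj⟩ := card_eq_one.mp (show hammingDist x y = 1 from hxy)
  have hy : y = Function.update x j (y j) :=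
    Function.eq_update_iff.mpr ⟨rfl, fun i hi => by
      by_contra hne
      exact hi (mem_singleton.mp (hj ▸ mem_filter.mpr ⟨mem_univ i, Ne.symm hne⟩))⟩
  have hxj : x j ≠ y j := by
    have hmem : j ∈ ({i | x i ≠ y i} : Finset (Fin n)) := by rw [hj]; exact mem_singleton_self j
    exact (mem_filter.mp hmem).2
  rcases show x j = false ∧ y j = true ∨ x j = true ∧ y j = false by
      revert hxj; cases x j <;> cases y j <;> decide with ⟨hx, hyj⟩ | ⟨hx, hyj⟩
  · exact ⟨j, hx, hyj ▸ hy⟩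
  · have hle : y ≤ x := by
      rw [hy, update_le_self_iff, hyj]
      exact Bool.false_le _
    have := wt_mono hle
    omega

lemma IsSymChain.exists_adj_wt_succ {n : ℕ} {c : List (Fin n → Bool)} (hc : IsSymChain n c)
    {x : Fin n → Bool} (hx : x ∈ c) (hwt : 2 * wt x < n) :
    ∃ y, (cube n).Adj x y ∧ wt y = wt x + 1 ∧ s(x, y) ∈ chainEdges c := by
  obtain ⟨-, hadj, k, hwtc, hlen⟩ := hc
  obtain ⟨⟨p, hp⟩, rfl⟩ := List.mem_iff_get.mp hx
  have hwtp := hwtc p hp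
  have hp1 : p + 1 < c.length := by omega
  refine ⟨c.get ⟨p + 1, hp1⟩, List.isChain_iff_getElem.mp hadj p hp1, ?_, p, hp1, rfl⟩
  rw [hwtc (p + 1) hp1, hwtp]
  rfl

lemma IsSCD.exists_flip_mem_scdEdges {n : ℕ} {D : Set (List (Fin n → Bool))} (hD : IsSCD n D)
    {x : Fin n → Bool} (hwt : 2 * wt x < n) :
    ∃ j, x j = false ∧ s(x, Function.update x j true) ∈ scdEdges D := by
  obtain ⟨c, ⟨hcD, hxc⟩, -⟩ := hD.2 x
  obtain ⟨y, hxy, hwty, hedge⟩ := (hD.1 c hcD).exists_adj_wt_succ hxc hwt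
  obtain ⟨j, hxj, rfl⟩ := exists_eq_update_true_of_cube_adj hxy hwty
  exact ⟨j, hxj, Set.mem_biUnion hcD hedge⟩

lemma card_le_of_pairwise_edgeDisjointSCD {n : ℕ} {ι : Type*} [Fintype ι]
    {D : ι → Set (List (Fin n → Bool))} (hSCD : ∀ i, IsSCD n (D i))
    (hdisj : Pairwise fun i j => EdgeDisjointSCD (D i) (D j))
    {x : Fin n → Bool} (hwt : 2 * wt x < n) : Fintype.card ι ≤ n - wt x := by
  choose f hf0 hfe using fun i => (hSCD i).exists_flip_mem_scdEdges hwt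
  have hinj : Function.Injective f := fun i₁ i₂ hf => by
    by_contra hne
    exact Set.disjoint_left.mp (hdisj hne) (hfe i₁) (hf ▸ hfe i₂)
  rw [← card_filter_eq_false, ← card_univ]
  exact card_le_card_of_injOn f (fun i _ => by simp [hf0 i]) hinj.injOn

/-- For any `n ≥ 1`, any family of pairwise edge-disjoint symmetric chain decompositions of
the `n`-cube has at most `⌊n/2⌋ + 1` members. -/
theorem edge_disjoint_SCDs_upper_bound (n m : ℕ) (hn : 1 ≤ n)
    (D : Fin m → Set (List (Fin n → Bool)))
    (hSCD : ∀ i, IsSCD n (D i))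
    (hdisj : ∀ i j, i ≠ j → EdgeDisjointSCD (D i) (D j)) :
    m ≤ n / 2 + 1 := by
  obtain ⟨x, hx⟩ := exists_wt_eq (show (n - 1) / 2 ≤ n by omega)
  have hm := card_le_of_pairwise_edgeDisjointSCD hSCD hdisj (x := x) (by omega)
  rw [Fintype.card_fin] at hm
  omega
end

section
/- For every n ≥ 1, the spanning subgraph of Q_n whose edge set is the union over k = 0, 1, …, n−1 of the 0-lexical matchings M^0_{n,k} is a disjoint union of symmetric chains: every connected component of this subgraph is a path (x_k, x_{k+1}, …, x_{n−k}) for some 0 ≤ k ≤ n/2 in which x_i has Hamming weight i for each i. In particular, these components form a symmetric chain decomposition of Q_n. -/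
/-- The number of 1-bits among the first `j` bits of `x` (interpreting a bitstring as a
lattice path, this determines the height after `j` steps). -/
def onesUpTo {n : ℕ} (x : Fin n → Bool) (j : ℕ) : ℕ :=
  (Finset.univ.filter fun i : Fin n => i.val < j ∧ x i = true).card

/-- The height of the lattice path of `x` after `j` steps: number of 1s minus number of 0s
among the first `j` bits (appended steps beyond the length of `x` being down-steps). -/
def hgt {n : ℕ} (x : Fin n → Bool) (j : ℕ) : ℤ := 2 * (onesUpTo x j : ℤ) - (j : ℤ)

/-- The length of the extended lattice path `x^↑`: if the final height `2·wt x − n` is `≥ −1`,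
down-steps are appended until the path ends at height `−1` (total length `2·wt x + 1`);
otherwise nothing is appended. -/
def extLen {n : ℕ} (x : Fin n → Bool) : ℕ := max n (2 * wt x + 1)

/-- Position `j` (0-indexed) of the extended path `x^↑` is a down-step: either it is a 0-bit
of `x`, or one of the appended down-steps. -/
def isDownStep {n : ℕ} (x : Fin n → Bool) (j : ℕ) : Prop :=
  j < extLen x ∧ ∀ h : j < n, x ⟨j, h⟩ = false

/-- The `i`-lexical matching `M^i_{n,k}` between levels `k` and `k+1` of the `n`-cube, as a
relation: `lexUp n k i x y` holds iff `x` lies in level `k` and `y = M^{i,↑}_{n,k}(x)`, i.e.,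
`y` is obtained from `x` by flipping to 1 the 0-bit at the `i`-th down-step of `x^↑` in the
order of decreasing starting height, ties broken from right to left, counting from 0,
provided this down-step lies within `x`. -/
def lexUp (n k i : ℕ) (x y : Fin n → Bool) : Prop :=
  wt x = k ∧ ∃ d : ℕ, d < n ∧ isDownStep x d ∧
    ({j : ℕ | isDownStep x j ∧ (hgt x d < hgt x j ∨ (hgt x j = hgt x d ∧ d < j))}).ncard = i ∧
    y = fun t : Fin n => if t.val = d then true else x t

/-!
Read a bitstring `x` as a lattice path with maximum height `peak x ≥ 0`. In the order defining
`M^0`, the first down-step of `x^↑` is the one leaving the last maximum of the path, so `M^0`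
flips the 0-bit there, and `x` is unmatched upwards exactly when that maximum is the endpoint.
Flipping it raises all later heights by 2, so the peak grows by one and the flipped bit becomes
the step into the *first* maximum of the new path; hence the inverse clears the bit just before
the first maximum, and is defined whenever the peak is positive. Consequently every vertex is
reached from a unique bottom vertex `b` (one with `peak b = 0`, so `2 wt b ≤ n`) by `peak x`
up-steps, and the chain from `b` runs through the weights `wt b, …, n - wt b`.
-/

namespace Lex0

variable {n : ℕ}

def setBit (x : Fin n → Bool) (d : ℕ) : Fin n → Bool := fun t => if t.val = d then true else x t

def clearBit (x : Fin n → Bool) (d : ℕ) : Fin n → Bool :=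
  fun t => if t.val = d then false else x t

section Bits

variable {x : Fin n → Bool} {d : ℕ}

lemma clearBit_setBit (hd : d < n) (hx : x ⟨d, hd⟩ = false) : clearBit (setBit x d) d = x := by
  funext t
  by_cases ht : t.val = d
  · obtain rfl : t = ⟨d, hd⟩ := Fin.ext ht
    simp [clearBit, hx]
  · simp [clearBit, setBit, ht]

lemma setBit_clearBit (hd : d < n) (hx : x ⟨d, hd⟩ = true) : setBit (clearBit x d) d = x := by
  funext t
  by_cases ht : t.val = d
  · obtain rfl : t = ⟨d, hd⟩ := Fin.ext ht
    simp [setBit, hx]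
  · simp [clearBit, setBit, ht]

lemma clearBit_apply_self (hd : d < n) : clearBit x d ⟨d, hd⟩ = false := by
  simp [clearBit]

lemma hammingDist_setBit (hd : d < n) (hx : x ⟨d, hd⟩ = false) :
    hammingDist x (setBit x d) = 1 := by
  have : setBit x d = Function.update x ⟨d, hd⟩ true := by
    funext t
    simp [setBit, Function.update_apply, Fin.ext_iff]
  rw [this, hammingDist_comm]
  simp only [hammingDist, Function.update_apply]
  rw [Finset.card_eq_one]
  refine ⟨⟨d, hd⟩, Finset.ext fun t => ?_⟩
  by_cases ht : t = ⟨d, hd⟩ <;> simp [ht, hx]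

end Bits

section Heights

variable (x : Fin n → Bool) {j : ℕ}

lemma onesUpTo_of_le (h : n ≤ j) : onesUpTo x j = wt x := by
  unfold onesUpTo wt
  congr 1
  ext t
  simp only [Finset.mem_filter, Finset.mem_univ, true_and, and_iff_right_iff_imp]
  omega

lemma onesUpTo_succ (hj : j < n) :
    onesUpTo x (j + 1) = onesUpTo x j + (x ⟨j, hj⟩).toNat := by
  unfold onesUpTo
  cases hxj : x ⟨j, hj⟩
  · rw [Bool.toNat_false, add_zero]
    congr 1
    ext t
    simp only [Finset.mem_filter, Finset.mem_univ, true_and]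
    grind
  · rw [Bool.toNat_true, ← Finset.card_insert_of_notMem (s := Finset.univ.filter _)
      (a := ⟨j, hj⟩) (by simp)]
    congr 1
    ext t
    simp only [Finset.mem_filter, Finset.mem_univ, true_and, Finset.mem_insert]
    grind

lemma onesUpTo_setBit {d : ℕ} (hd : d < n) (hx : x ⟨d, hd⟩ = false) (j : ℕ) :
    onesUpTo (setBit x d) j = onesUpTo x j + if d < j then 1 else 0 := by
  unfold onesUpTo setBit
  split_ifs with hdj
  · rw [← Finset.card_insert_of_notMem (s := Finset.univ.filter _) (a := ⟨d, hd⟩) (by simp [hx])]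
    congr 1
    ext t
    simp only [Finset.mem_filter, Finset.mem_univ, true_and, Finset.mem_insert]
    grind
  · rw [add_zero]
    congr 1
    ext t
    simp only [Finset.mem_filter, Finset.mem_univ, true_and]
    grind

lemma hgt_zero : hgt x 0 = 0 := by simp [hgt, onesUpTo]

lemma hgt_succ_of_false (hj : j < n) (hx : x ⟨j, hj⟩ = false) : hgt x (j + 1) = hgt x j - 1 := by
  simp only [hgt, onesUpTo_succ x hj, hx, Bool.toNat_false]
  push_cast
  ring

lemma hgt_succ_of_true (hj : j < n) (hx : x ⟨j, hj⟩ = true) : hgt x (j + 1) = hgt x j + 1 := by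
  simp only [hgt, onesUpTo_succ x hj, hx, Bool.toNat_true]
  push_cast
  ring

lemma hgt_of_le (h : n ≤ j) : hgt x j = 2 * wt x - j := by
  rw [hgt, onesUpTo_of_le x h]

lemma hgt_lt_hgt_length (h : n < j) : hgt x j < hgt x n := by
  rw [hgt_of_le x h.le, hgt_of_le x le_rfl]
  omega

lemma hgt_setBit {d : ℕ} (hd : d < n) (hx : x ⟨d, hd⟩ = false) (j : ℕ) :
    hgt (setBit x d) j = hgt x j + if d < j then 2 else 0 := by
  simp only [hgt, onesUpTo_setBit x hd hx]
  split_ifs <;> push_cast <;> ring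

lemma wt_setBit {d : ℕ} (hd : d < n) (hx : x ⟨d, hd⟩ = false) : wt (setBit x d) = wt x + 1 := by
  simpa [onesUpTo_of_le _ le_rfl, hd] using onesUpTo_setBit x hd hx n

end Heights

section Peaks

variable (x : Fin n → Bool) {d : ℕ}

def peak : ℤ := (Finset.range (n + 1)).sup' Finset.nonempty_range_add_one (hgt x)

lemma hgt_le_peak (j : ℕ) : hgt x j ≤ peak x := by
  have hle : ∀ i ≤ n, hgt x i ≤ peak x := fun i hi =>
    Finset.le_sup' (hgt x) (Finset.mem_range.2 (Nat.lt_succ_of_le hi))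
  rcases le_or_gt j n with h | h
  · exact hle j h
  · exact (hgt_lt_hgt_length x h).le.trans (hle n le_rfl)

lemma exists_hgt_eq_peak : ∃ j ≤ n, hgt x j = peak x := by
  obtain ⟨j, hj, h⟩ := Finset.exists_mem_eq_sup' Finset.nonempty_range_add_one (hgt x)
  exact ⟨j, Nat.lt_succ_iff.1 (Finset.mem_range.1 hj), h.symm⟩

lemma peak_nonneg : 0 ≤ peak x := hgt_zero x ▸ hgt_le_peak x 0

def IsLastPeak (d : ℕ) : Prop := (∀ j ≤ d, hgt x j ≤ hgt x d) ∧ ∀ j, d < j → hgt x j < hgt x d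

def IsFirstPeak (f : ℕ) : Prop := (∀ j < f, hgt x j < hgt x f) ∧ ∀ j, f ≤ j → hgt x j ≤ hgt x f

def lastPeak : ℕ := Nat.findGreatest (fun j => hgt x j = peak x) n

def firstPeak : ℕ := Nat.find (exists_hgt_eq_peak x)

lemma lastPeak_le : lastPeak x ≤ n := Nat.findGreatest_le n

lemma hgt_lastPeak : hgt x (lastPeak x) = peak x := by
  obtain ⟨j, hj, hjx⟩ := exists_hgt_eq_peak x
  exact Nat.findGreatest_spec (P := fun j => hgt x j = peak x) hj hjx

lemma isLastPeak_lastPeak : IsLastPeak x (lastPeak x) := by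
  rw [IsLastPeak, hgt_lastPeak]
  refine ⟨fun j _ => hgt_le_peak x j, fun j hj => ?_⟩
  rcases le_or_gt j n with hjn | hjn
  · exact lt_of_le_of_ne (hgt_le_peak x j) (Nat.findGreatest_is_greatest hj hjn)
  · exact (hgt_lt_hgt_length x hjn).trans_le (hgt_le_peak x n)

lemma hgt_firstPeak : hgt x (firstPeak x) = peak x := (Nat.find_spec (exists_hgt_eq_peak x)).2

lemma isFirstPeak_firstPeak : IsFirstPeak x (firstPeak x) := by
  rw [IsFirstPeak, hgt_firstPeak]
  refine ⟨fun j hj => lt_of_le_of_ne (hgt_le_peak x j) fun h => ?_, fun j _ => hgt_le_peak x j⟩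
  exact Nat.find_min (exists_hgt_eq_peak x) hj
    ⟨hj.le.trans (Nat.find_spec (exists_hgt_eq_peak x)).1, h⟩

variable {x}

lemma IsLastPeak.lastPeak_eq (h : IsLastPeak x d) : lastPeak x = d := by
  have h' := isLastPeak_lastPeak x
  rcases lt_trichotomy (lastPeak x) d with hlt | heq | hgt
  · exact absurd (h'.2 d hlt) (not_lt.2 (h.1 _ hlt.le))
  · exact heq
  · exact absurd (h.2 _ hgt) (not_lt.2 (h'.1 d hgt.le))

lemma IsFirstPeak.firstPeak_eq (h : IsFirstPeak x d) : firstPeak x = d := by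
  have h' := isFirstPeak_firstPeak x
  rcases lt_trichotomy (firstPeak x) d with hlt | heq | hgt
  · exact absurd (h.1 _ hlt) (not_lt.2 (h'.2 d hlt.le))
  · exact heq
  · exact absurd (h'.1 d hgt) (not_lt.2 (h.2 _ hgt.le))

lemma lastPeak_lt_iff : lastPeak x < n ↔ 2 * (wt x : ℤ) - n < peak x := by
  rw [← hgt_of_le x le_rfl]
  refine ⟨fun h => hgt_lastPeak x ▸ (isLastPeak_lastPeak x).2 n h, fun h => ?_⟩
  exact lt_of_le_of_ne (lastPeak_le x) fun hn =>
    h.ne (by simpa only [hn] using hgt_lastPeak x)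

end Peaks

lemma isLastPeak_iff_isFirstPeak_setBit {x : Fin n → Bool} {d : ℕ} (hd : d < n)
    (hx : x ⟨d, hd⟩ = false) :
    IsLastPeak x d ↔ IsFirstPeak (setBit x d) (d + 1) := by
  have hstep := hgt_succ_of_false x hd hx
  simp only [IsLastPeak, IsFirstPeak, hgt_setBit x hd hx, if_pos (Nat.lt_add_one d)]
  refine and_congr (forall_congr' fun j => ?_) (forall_congr' fun j => ?_)
  · split_ifs <;> omega
  · split_ifs <;> omega

def up (x : Fin n → Bool) : Fin n → Bool := setBit x (lastPeak x)

def down (y : Fin n → Bool) : Fin n → Bool := clearBit y (firstPeak y - 1)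

section UpDown

variable {x y : Fin n → Bool}

lemma bit_lastPeak (h : lastPeak x < n) : x ⟨lastPeak x, h⟩ = false := by
  by_contra hx
  have := hgt_succ_of_true x h (Bool.eq_true_of_not_eq_false hx)
  have := (isLastPeak_lastPeak x).2 _ (Nat.lt_add_one _)
  omega

lemma firstPeak_up (h : lastPeak x < n) : firstPeak (up x) = lastPeak x + 1 :=
  ((isLastPeak_iff_isFirstPeak_setBit h (bit_lastPeak h)).1 (isLastPeak_lastPeak x)).firstPeak_eq

lemma peak_up (h : lastPeak x < n) : peak (up x) = peak x + 1 := by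
  rw [← hgt_firstPeak, firstPeak_up h, up,
    hgt_setBit x h (bit_lastPeak h), if_pos (Nat.lt_add_one _),
    hgt_succ_of_false x h (bit_lastPeak h), hgt_lastPeak]
  ring

lemma wt_up (h : lastPeak x < n) : wt (up x) = wt x + 1 := wt_setBit x h (bit_lastPeak h)

lemma hammingDist_up (h : lastPeak x < n) : hammingDist x (up x) = 1 :=
  hammingDist_setBit h (bit_lastPeak h)

lemma down_up (h : lastPeak x < n) : down (up x) = x := by
  rw [down, firstPeak_up h, Nat.add_sub_cancel]
  exact clearBit_setBit h (bit_lastPeak h)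

lemma firstPeak_pos (h : 0 < peak y) : 0 < firstPeak y := by
  refine Nat.pos_of_ne_zero fun h0 => h.ne ?_
  rw [← hgt_firstPeak, h0, hgt_zero]

lemma firstPeak_le : firstPeak y ≤ n := by
  obtain ⟨j, hj, hjy⟩ := exists_hgt_eq_peak y
  exact (Nat.find_min' _ ⟨hj, hjy⟩).trans hj

lemma firstPeak_pred_lt (h : 0 < peak y) : firstPeak y - 1 < n := by
  have := firstPeak_pos h
  have := firstPeak_le (y := y)
  omega

lemma bit_firstPeak_pred (h : 0 < peak y) : y ⟨firstPeak y - 1, firstPeak_pred_lt h⟩ = true := by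
  by_contra hy
  have hstep := hgt_succ_of_false y _ (Bool.eq_false_iff.2 hy)
  rw [Nat.sub_add_cancel (firstPeak_pos h)] at hstep
  have := (isFirstPeak_firstPeak y).1 _ (Nat.sub_lt (firstPeak_pos h) one_pos)
  omega

lemma lastPeak_down (h : 0 < peak y) : lastPeak (down y) = firstPeak y - 1 := by
  have hlt := firstPeak_pred_lt h
  refine ((isLastPeak_iff_isFirstPeak_setBit hlt (clearBit_apply_self hlt)).2 ?_).lastPeak_eq
  rw [setBit_clearBit hlt (bit_firstPeak_pred h), Nat.sub_add_cancel (firstPeak_pos h)]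
  exact isFirstPeak_firstPeak y

lemma lastPeak_down_lt (h : 0 < peak y) : lastPeak (down y) < n :=
  lastPeak_down h ▸ firstPeak_pred_lt h

lemma up_down (h : 0 < peak y) : up (down y) = y := by
  rw [up, lastPeak_down h]
  exact setBit_clearBit _ (bit_firstPeak_pred h)

lemma peak_eq_peak_down_add_one (h : 0 < peak y) : peak y = peak (down y) + 1 := by
  simpa only [up_down h] using peak_up (lastPeak_down_lt h)

lemma wt_eq_wt_down_add_one (h : 0 < peak y) : wt y = wt (down y) + 1 := by
  simpa only [up_down h] using wt_up (lastPeak_down_lt h)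

end UpDown

section Chains

variable {b x : Fin n → Bool} {t : ℕ}

lemma two_mul_wt_le (hb : peak b = 0) : 2 * wt b ≤ n := by
  have := hgt_le_peak b n
  rw [hb, hgt_of_le b le_rfl] at this
  omega

lemma peak_wt_iterate_up (hb : peak b = 0) (ht : t ≤ n - 2 * wt b) :
    peak (up^[t] b) = t ∧ wt (up^[t] b) = wt b + t := by
  induction t with
  | zero => exact ⟨hb, rfl⟩
  | succ t ih =>
    obtain ⟨hp, hw⟩ := ih (by omega)
    have hlt : lastPeak (up^[t] b) < n := by
      rw [lastPeak_lt_iff, hp, hw]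
      push_cast
      omega
    rw [Function.iterate_succ_apply', peak_up hlt, wt_up hlt, hp, hw]
    push_cast
    exact ⟨rfl, rfl⟩

lemma lastPeak_iterate_up_lt_iff (hb : peak b = 0) (ht : t ≤ n - 2 * wt b) :
    lastPeak (up^[t] b) < n ↔ t < n - 2 * wt b := by
  obtain ⟨hp, hw⟩ := peak_wt_iterate_up hb ht
  have := two_mul_wt_le hb
  rw [lastPeak_lt_iff, hp, hw]
  push_cast
  omega

lemma down_iterate_up (hb : peak b = 0) (ht : t ≤ n - 2 * wt b) : down^[t] (up^[t] b) = b := by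
  induction t with
  | zero => rfl
  | succ t ih =>
    rw [Function.iterate_succ_apply, Function.iterate_succ_apply',
      down_up ((lastPeak_iterate_up_lt_iff hb (by omega)).2 (by omega)), ih (by omega)]

lemma exists_iterate_up_eq (x : Fin n → Bool) :
    ∃ b, peak b = 0 ∧ up^[(peak x).toNat] b = x ∧ wt x = wt b + (peak x).toNat := by
  generalize hm : (peak x).toNat = m
  induction m generalizing x with
  | zero => exact ⟨x, by have := peak_nonneg x; omega, rfl, rfl⟩
  | succ m ih =>
    have hpos : 0 < peak x := by omega
    have hp := peak_eq_peak_down_add_one hpos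
    obtain ⟨b, hb, hup, hw⟩ := ih (down x) (by omega)
    refine ⟨b, hb, ?_, by rw [wt_eq_wt_down_add_one hpos, hw, add_assoc]⟩
    rw [Function.iterate_succ_apply', hup, up_down hpos]

def chain (b : Fin n → Bool) : List (Fin n → Bool) :=
  (List.range (n - 2 * wt b + 1)).map (up^[·] b)

lemma mem_chain : x ∈ chain b ↔ ∃ t ≤ n - 2 * wt b, up^[t] b = x := by
  simp only [chain, List.mem_map, List.mem_range, Nat.lt_succ_iff]

lemma exists_mem_chain (x : Fin n → Bool) : ∃ b, peak b = 0 ∧ x ∈ chain b := by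
  obtain ⟨b, hb, hup, hw⟩ := exists_iterate_up_eq x
  have hn := hgt_le_peak x n
  rw [hgt_of_le x le_rfl, hw] at hn
  exact ⟨b, hb, mem_chain.2 ⟨_, by omega, hup⟩⟩

lemma eq_of_mem_chain {b' : Fin n → Bool} (hb : peak b = 0) (hb' : peak b' = 0)
    (hx : x ∈ chain b) (hx' : x ∈ chain b') : b = b' := by
  obtain ⟨t, ht, rfl⟩ := mem_chain.1 hx
  obtain ⟨t', ht', hx'⟩ := mem_chain.1 hx'
  obtain rfl : t' = t := by
    have := (peak_wt_iterate_up hb ht).1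
    rw [← hx', (peak_wt_iterate_up hb' ht').1] at this
    exact_mod_cast this
  rw [← down_iterate_up hb ht, ← hx', down_iterate_up hb' ht']

lemma isSymChain_chain (hb : peak b = 0) : IsSymChain n (chain b) := by
  have := two_mul_wt_le hb
  refine ⟨by simp [chain], ?_, wt b, fun i hi => ?_, ?_⟩
  · rw [chain, List.Chain', List.isChain_map, List.isChain_range_succ]
    intro t ht
    rw [Function.iterate_succ_apply']
    exact hammingDist_up ((lastPeak_iterate_up_lt_iff hb ht.le).2 ht)
  · simp only [chain, List.length_map, List.length_range] at hi
    simpa only [chain, List.get_eq_getElem, List.getElem_map, List.getElem_range]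
      using (peak_wt_iterate_up hb (Nat.lt_succ_iff.1 hi)).2
  · simp only [chain, List.length_map, List.length_range]
    omega

lemma isSCD_chains : IsSCD n (chain '' {b | peak b = 0}) := by
  refine ⟨by rintro _ ⟨b, hb, rfl⟩; exact isSymChain_chain hb, fun x => ?_⟩
  obtain ⟨b, hb, hx⟩ := exists_mem_chain x
  refine ⟨chain b, ⟨⟨b, hb, rfl⟩, hx⟩, ?_⟩
  rintro _ ⟨⟨b', hb', rfl⟩, hx'⟩
  rw [eq_of_mem_chain hb' hb hx' hx]

lemma mem_chainEdges_chain {e : Sym2 (Fin n → Bool)} :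
    e ∈ chainEdges (chain b) ↔ ∃ t < n - 2 * wt b, e = s(up^[t] b, up (up^[t] b)) := by
  simp only [chainEdges, chain, Set.mem_ofPred_eq, List.get_eq_getElem, List.getElem_map,
    List.getElem_range, List.length_map, List.length_range, Function.iterate_succ_apply',
    Nat.add_lt_add_iff_right, exists_prop]

end Chains

lemma isDownStep_lastPeak (x : Fin n → Bool) : isDownStep x (lastPeak x) := by
  rcases (lastPeak_le x).lt_or_eq with h | h
  · exact ⟨h.trans_le (le_max_left _ _), fun h => bit_lastPeak h⟩
  · have hn := hgt_lastPeak x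
    rw [h, hgt_of_le x le_rfl] at hn
    have := peak_nonneg x
    refine ⟨?_, fun h' => absurd h' (by omega)⟩
    exact lt_of_lt_of_le (by omega) (le_max_right _ _)

lemma ncard_downSteps_preceding_eq_zero_iff (x : Fin n → Bool) (d : ℕ) :
    {j : ℕ | isDownStep x j ∧ (hgt x d < hgt x j ∨ (hgt x j = hgt x d ∧ d < j))}.ncard = 0 ↔
      d = lastPeak x := by
  have hfin : {j : ℕ | isDownStep x j ∧ (hgt x d < hgt x j ∨ (hgt x j = hgt x d ∧ d < j))}.Finite :=
    (Set.finite_Iio (extLen x)).subset fun j hj => hj.1.1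
  rw [Set.ncard_eq_zero hfin, Set.eq_empty_iff_forall_notMem]
  have hlast := isLastPeak_lastPeak x
  have hpeak := hgt_lastPeak x
  constructor
  · intro h
    have hl := h (lastPeak x)
    simp only [Set.mem_ofPred_eq, isDownStep_lastPeak x, true_and, not_or, not_and] at hl
    have hd := hgt_le_peak x d
    rcases lt_trichotomy d (lastPeak x) with hlt | heq | hgt
    · exact absurd hlt (hl.2 (by omega))
    · exact heq
    · have := hlast.2 d hgt
      omega
  · rintro rfl j ⟨-, hj | hj⟩
    · have := hgt_le_peak x j
      omega
    · have := hlast.2 j hj.2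
      omega

lemma lexUp_zero_iff {k : ℕ} {x y : Fin n → Bool} :
    lexUp n k 0 x y ↔ wt x = k ∧ lastPeak x < n ∧ y = up x := by
  simp only [lexUp, ncard_downSteps_preceding_eq_zero_iff]
  constructor
  · rintro ⟨hk, d, hd, -, rfl, rfl⟩
    exact ⟨hk, hd, rfl⟩
  · rintro ⟨hk, hd, rfl⟩
    exact ⟨hk, _, hd, isDownStep_lastPeak x, rfl, rfl⟩

lemma scdEdges_chains : scdEdges (chain '' {b : Fin n → Bool | peak b = 0}) =
    {e | ∃ k < n, ∃ x y : Fin n → Bool, lexUp n k 0 x y ∧ e = s(x, y)} := by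
  ext e
  simp only [scdEdges, Set.biUnion_image, Set.mem_iUnion, Set.mem_ofPred_eq, exists_prop,
    mem_chainEdges_chain, lexUp_zero_iff]
  constructor
  · rintro ⟨b, hb, t, ht, rfl⟩
    have hw := (peak_wt_iterate_up hb ht.le).2
    exact ⟨_, by omega, _, _, ⟨rfl, (lastPeak_iterate_up_lt_iff hb ht.le).2 ht, rfl⟩, rfl⟩
  · rintro ⟨k, -, x, _, ⟨-, hx, rfl⟩, rfl⟩
    obtain ⟨b, hb, hxb⟩ := exists_mem_chain x
    obtain ⟨t, ht, rfl⟩ := mem_chain.1 hxb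
    exact ⟨b, hb, t, (lastPeak_iterate_up_lt_iff hb ht).1 hx, rfl⟩

end Lex0

theorem lexical0_is_SCD_general (n : ℕ) :
    ∃ D : Set (List (Fin n → Bool)), IsSCD n D ∧
      scdEdges D = {e : Sym2 (Fin n → Bool) |
        ∃ k < n, ∃ x y : Fin n → Bool, lexUp n k 0 x y ∧ e = s(x, y)} :=
  ⟨Lex0.chain '' {b | Lex0.peak b = 0}, Lex0.isSCD_chains, Lex0.scdEdges_chains⟩

/-- For any `n ≥ 1`, the spanning subgraph of the `n`-cube with edge set
`⋃_{k=0}^{n−1} M^0_{n,k}` is a disjoint union of symmetric chains: there is a symmetric chain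
decomposition of the `n`-cube whose chain edges are exactly the edges of the 0-lexical
matchings; consequently every connected component of this subgraph is a symmetric chain. -/
theorem lexical0_is_SCD (n : ℕ) (hn : 1 ≤ n) :
    ∃ D : Set (List (Fin n → Bool)), IsSCD n D ∧
      scdEdges D = {e : Sym2 (Fin n → Bool) |
        ∃ k < n, ∃ x y : Fin n → Bool, lexUp n k 0 x y ∧ e = s(x, y)} :=
  lexical0_is_SCD_general n
end

section
/- For every even n ≥ 2, the spanning subgraph of Q_n whose edge set is the union over k = 0, 1, …, n−1 of the 1-lexical matchings M^1_{n,k} is a disjoint union of symmetric chains: every connected component of this subgraph is a path (x_k, x_{k+1}, …, x_{n−k}) for some 0 ≤ k ≤ n/2 in which x_i has Hamming weight i for each i. In particular, these components form a symmetric chain decomposition of Q_n. -/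
/-!
Read a bitstring `x` as a lattice path and let `M` be its maximum height on `[0, n]`; the visits to
height `M` are the peaks. The first down-steps of `x^↑` in the lexical order are the peaks (from
right to left) followed by the down-steps starting at height `M - 1`. Hence `M^1` flips the
second-to-last peak if there are at least two peaks (the path then has a single peak, at height
`M + 2`), and otherwise the last visit to height `M - 1`, which exists within `x` exactly when the
path ends at height at most `M - 2` (the path then has at least two peaks, at height `M`). For even
`n` the final height is even, and an unmatched vertex has no `M^1`-edge upwards at all.

So along the chain starting at a bottom `b` (a single peak, at height at most `1`) the two cases
alternate and every second step raises both the maximum height and the weight by `2`; the final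
height `2 wt - n` catches up with the maximum height exactly at weight `n - wt b`, where the chain
stops, so it is symmetric. Conjugating the up map by reversal followed by complementation gives
its inverse, defined exactly on the vertices that are not bottoms; so every vertex lies on exactly
one chain.
-/

structure ChainSystem (V : Type*) where
  up : V → V
  down : V → V
  IsMatched : V → Prop
  IsBottom : V → Prop
  rank : V → ℕ
  len : V → ℕ
  down_up : ∀ x, IsMatched x → down (up x) = x
  not_isBottom_up : ∀ x, IsMatched x → ¬ IsBottom (up x)
  isMatched_down : ∀ y, ¬ IsBottom y → IsMatched (down y)
  up_down : ∀ y, ¬ IsBottom y → up (down y) = y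
  rank_up : ∀ x, IsMatched x → rank (up x) = rank x + 1
  isMatched_iterate : ∀ b, IsBottom b → ∀ i < len b, IsMatched (up^[i] b)
  not_isMatched_iterate_len : ∀ b, IsBottom b → ¬ IsMatched (up^[len b] b)

namespace ChainSystem

variable {V : Type*} (S : ChainSystem V) {b b' x : V}

theorem rank_iterate (hb : S.IsBottom b) {i : ℕ} (hi : i ≤ S.len b) :
    S.rank (S.up^[i] b) = S.rank b + i := by
  induction i with
  | zero => rfl
  | succ i ih =>
    rw [Function.iterate_succ_apply', S.rank_up _ (S.isMatched_iterate b hb i hi), ih (by omega),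
      add_assoc]

theorem lt_len_of_isMatched (hb : S.IsBottom b) {i : ℕ} (hi : i ≤ S.len b)
    (hm : S.IsMatched (S.up^[i] b)) : i < S.len b :=
  lt_of_le_of_ne hi fun h => S.not_isMatched_iterate_len b hb (h ▸ hm)

theorem exists_iterate_eq (x : V) : ∃ b, S.IsBottom b ∧ ∃ i ≤ S.len b, S.up^[i] b = x := by
  induction hr : S.rank x generalizing x with
  | zero =>
    by_contra! h
    have hx : ¬ S.IsBottom x := fun hx => h x hx 0 (Nat.zero_le _) rfl
    have := S.rank_up _ (S.isMatched_down x hx)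
    rw [S.up_down x hx] at this
    omega
  | succ r ih =>
    by_cases hx : S.IsBottom x
    · exact ⟨x, hx, 0, Nat.zero_le _, rfl⟩
    have hrank := S.rank_up _ (S.isMatched_down x hx)
    rw [S.up_down x hx] at hrank
    obtain ⟨b, hb, i, hi, hbx⟩ := ih (S.down x) (by omega)
    have hilt := S.lt_len_of_isMatched hb hi (hbx ▸ S.isMatched_down x hx)
    refine ⟨b, hb, i + 1, hilt, ?_⟩
    rw [Function.iterate_succ_apply', hbx, S.up_down x hx]

theorem iterate_injective (hb : S.IsBottom b) (hb' : S.IsBottom b') {i i' : ℕ}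
    (hi : i ≤ S.len b) (hi' : i' ≤ S.len b') (h : S.up^[i] b = S.up^[i'] b') : b = b' := by
  induction i generalizing i' with
  | zero =>
    cases i' with
    | zero => exact h
    | succ i' =>
      rw [Function.iterate_succ_apply'] at h
      exact absurd (h ▸ hb) (S.not_isBottom_up _ (S.isMatched_iterate b' hb' i' hi'))
  | succ i ih =>
    cases i' with
    | zero =>
      rw [Function.iterate_succ_apply'] at h
      exact absurd (h ▸ hb') (S.not_isBottom_up _ (S.isMatched_iterate b hb i hi))
    | succ i' =>
      rw [Function.iterate_succ_apply', Function.iterate_succ_apply'] at h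
      refine ih (i' := i') (Nat.le_of_succ_le hi) (Nat.le_of_succ_le hi') ?_
      rw [← S.down_up _ (S.isMatched_iterate b hb i hi),
        ← S.down_up _ (S.isMatched_iterate b' hb' i' hi'), h]

theorem isMatched_iff : S.IsMatched x ↔ ∃ b, S.IsBottom b ∧ ∃ i < S.len b, S.up^[i] b = x := by
  refine ⟨fun hx => ?_, fun ⟨b, hb, i, hi, hbx⟩ => hbx ▸ S.isMatched_iterate b hb i hi⟩
  obtain ⟨b, hb, i, hi, rfl⟩ := S.exists_iterate_eq x
  exact ⟨b, hb, i, S.lt_len_of_isMatched hb hi hx, rfl⟩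

def chain (b : V) : List V := (List.range (S.len b + 1)).map (S.up^[·] b)

@[simp]
theorem length_chain (b : V) : (S.chain b).length = S.len b + 1 := by
  simp [chain]

theorem getElem_chain (b : V) {i : ℕ} (h : i < (S.chain b).length) :
    (S.chain b)[i] = S.up^[i] b := by
  simp only [chain, List.getElem_map, List.getElem_range]

theorem mem_chain : x ∈ S.chain b ↔ ∃ i ≤ S.len b, S.up^[i] b = x := by
  simp only [chain, List.mem_map, List.mem_range, Nat.lt_succ_iff]

theorem existsUnique_mem_chain (x : V) : ∃! c, c ∈ S.chain '' {b | S.IsBottom b} ∧ x ∈ c := by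
  obtain ⟨b, hb, i, hi, rfl⟩ := S.exists_iterate_eq x
  refine ⟨S.chain b, ⟨⟨b, hb, rfl⟩, S.mem_chain.2 ⟨i, hi, rfl⟩⟩, ?_⟩
  rintro _ ⟨⟨b', hb', rfl⟩, hx⟩
  obtain ⟨i', hi', h⟩ := S.mem_chain.1 hx
  rw [S.iterate_injective hb' hb hi' hi h]

theorem mem_chainEdges_chain {e : Sym2 V} :
    e ∈ chainEdges (S.chain b) ↔ ∃ i < S.len b, e = s(S.up^[i] b, S.up (S.up^[i] b)) := by
  simp only [chainEdges, Set.mem_ofPred_eq, length_chain, List.get_eq_getElem, getElem_chain,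
    Function.iterate_succ_apply']
  constructor <;> rintro ⟨i, hi, rfl⟩ <;> exact ⟨i, by omega, rfl⟩

theorem biUnion_chainEdges_chain :
    ⋃ c ∈ S.chain '' {b | S.IsBottom b}, chainEdges c =
      {e | ∃ x, S.IsMatched x ∧ e = s(x, S.up x)} := by
  ext e
  simp only [Set.biUnion_image, Set.mem_iUnion, Set.mem_ofPred_eq, mem_chainEdges_chain,
    S.isMatched_iff, exists_prop]
  constructor
  · rintro ⟨b, hb, i, hi, rfl⟩
    exact ⟨_, ⟨b, hb, i, hi, rfl⟩, rfl⟩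
  · rintro ⟨_, ⟨b, hb, i, hi, rfl⟩, rfl⟩
    exact ⟨b, hb, i, hi, rfl⟩

end ChainSystem

namespace LexicalMatching

open Finset

variable {n : ℕ}

def setBit (x : Fin n → Bool) (d : ℕ) : Fin n → Bool := fun t => if t.val = d then true else x t

/-- Reversal followed by complementation reflects lattice paths; it conjugates the up map of the
1-lexical matching into its down map. -/
def revComp (x : Fin n → Bool) : Fin n → Bool := fun i => !x i.rev

theorem onesUpTo_succ (x : Fin n → Bool) {j : ℕ} (hj : j < n) :
    onesUpTo x (j + 1) = onesUpTo x j + if x ⟨j, hj⟩ then 1 else 0 := by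
  have hsplit : (univ.filter fun i : Fin n => i.val < j + 1 ∧ x i = true) =
      (univ.filter fun i : Fin n => i.val < j ∧ x i = true) ∪
        (univ.filter fun i : Fin n => i = ⟨j, hj⟩ ∧ x i = true) := by
    ext i
    simp only [mem_filter, mem_univ, true_and, mem_union, Fin.ext_iff, Nat.lt_succ_iff_lt_or_eq,
      or_and_right]
  rw [onesUpTo, hsplit, card_union_of_disjoint (disjoint_filter.2 fun i _ h h' => by
    rw [h'.1] at h; exact lt_irrefl _ h.1)]
  cases hx : x ⟨j, hj⟩ <;> simp [onesUpTo, filter_and, filter_eq', hx]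

theorem onesUpTo_of_le (x : Fin n → Bool) {j : ℕ} (hj : n ≤ j) : onesUpTo x j = wt x := by
  simp only [onesUpTo, wt]
  congr 1
  ext i
  simp only [mem_filter, mem_univ, true_and, and_iff_right_iff_imp]
  exact fun _ => i.isLt.trans_le hj

theorem hgt_zero (x : Fin n → Bool) : hgt x 0 = 0 := by
  simp [hgt, onesUpTo]

theorem hgt_succ (x : Fin n → Bool) {j : ℕ} (hj : j < n) :
    hgt x (j + 1) = hgt x j + if x ⟨j, hj⟩ then 1 else -1 := by
  simp only [hgt, onesUpTo_succ x hj]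
  split_ifs <;> push_cast <;> ring

theorem hgt_of_le (x : Fin n → Bool) {j : ℕ} (hj : n ≤ j) : hgt x j = 2 * wt x - j := by
  rw [hgt, onesUpTo_of_le x hj]

theorem onesUpTo_setBit {x : Fin n → Bool} {d : ℕ} (hd : d < n) (hx : x ⟨d, hd⟩ = false)
    (j : ℕ) : onesUpTo (setBit x d) j = onesUpTo x j + if d < j then 1 else 0 := by
  have hsplit : (univ.filter fun i : Fin n => i.val < j ∧ setBit x d i = true) =
      (univ.filter fun i : Fin n => i.val < j ∧ x i = true) ∪
        (univ.filter fun i : Fin n => i = ⟨d, hd⟩ ∧ d < j) := by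
    ext i
    by_cases hi : i = ⟨d, hd⟩
    · subst hi
      simp [setBit, hx]
    · have hi' : i.val ≠ d := fun h => hi (Fin.ext h)
      simp [setBit, hi, hi']
  rw [onesUpTo, hsplit, card_union_of_disjoint (disjoint_filter.2 fun i _ h h' => by
    rw [h'.1] at h; simp [hx] at h)]
  by_cases hdj : d < j <;> simp [onesUpTo, hdj, filter_eq']

theorem wt_setBit {x : Fin n → Bool} {d : ℕ} (hd : d < n) (hx : x ⟨d, hd⟩ = false) :
    wt (setBit x d) = wt x + 1 := by
  have := onesUpTo_setBit hd hx n
  rwa [onesUpTo_of_le _ le_rfl, onesUpTo_of_le _ le_rfl, if_pos hd] at this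

theorem hgt_setBit {x : Fin n → Bool} {d : ℕ} (hd : d < n) (hx : x ⟨d, hd⟩ = false) (j : ℕ) :
    hgt (setBit x d) j = hgt x j + if d < j then 2 else 0 := by
  simp only [hgt, onesUpTo_setBit hd hx j]
  split_ifs <;> push_cast <;> ring

theorem hammingDist_setBit {x : Fin n → Bool} {d : ℕ} (hd : d < n) (hx : x ⟨d, hd⟩ = false) :
    hammingDist x (setBit x d) = 1 := by
  rw [hammingDist, card_eq_one]
  refine ⟨⟨d, hd⟩, ?_⟩
  ext i
  by_cases hi : i = ⟨d, hd⟩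
  · subst hi
    simp [setBit, hx]
  · have hi' : i.val ≠ d := fun h => hi (Fin.ext h)
    simp [setBit, hi, hi']

theorem revComp_revComp (x : Fin n → Bool) : revComp (revComp x) = x := by
  funext i
  simp [revComp]

theorem revComp_setBit {x : Fin n → Bool} {d : ℕ} (hd : d < n) (hx : x ⟨d, hd⟩ = false) :
    setBit (revComp (setBit x d)) (n - 1 - d) = revComp x := by
  funext i
  by_cases hi : i.val = n - 1 - d
  · have : i.rev = ⟨d, hd⟩ := Fin.ext (by simp [Fin.val_rev]; omega)
    simp [setBit, revComp, hi, this, hx]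
  · have : n - (i.val + 1) ≠ d := by omega
    simp [setBit, revComp, hi, Fin.val_rev, this]

theorem hgt_revComp (x : Fin n → Bool) {j : ℕ} (hj : j ≤ n) :
    hgt (revComp x) j = hgt x (n - j) - hgt x n := by
  induction j with
  | zero => simp [hgt_zero]
  | succ j ih =>
    have hrev : (⟨j, hj⟩ : Fin n).rev = ⟨n - (j + 1), by omega⟩ := Fin.ext (by simp [Fin.val_rev])
    have hstep := hgt_succ x (j := n - (j + 1)) (by omega)
    rw [show n - (j + 1) + 1 = n - j by omega] at hstep
    rw [hgt_succ _ hj, ih (by omega), revComp, hrev]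
    cases hb : x ⟨n - (j + 1), _⟩
    all_goals simp only [hb, Bool.not_false, Bool.not_true, Bool.false_eq_true, ↓reduceIte]
      at hstep ⊢
    all_goals omega

theorem bit_eq_false_of_hgt_succ_le {x : Fin n → Bool} {j : ℕ} (hj : j < n)
    (h : hgt x (j + 1) ≤ hgt x j) : x ⟨j, hj⟩ = false := by
  rw [hgt_succ x hj] at h
  cases hx : x ⟨j, hj⟩ <;> simp_all

def maxHgt (x : Fin n → Bool) : ℤ := (range (n + 1)).sup' nonempty_range_add_one (hgt x)

def visits (x : Fin n → Bool) (m : ℤ) : Finset ℕ := (range (n + 1)).filter (hgt x · = m)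

def peaks (x : Fin n → Bool) : Finset ℕ := visits x (maxHgt x)

variable {x : Fin n → Bool} {j : ℕ}

theorem mem_visits {m : ℤ} : j ∈ visits x m ↔ j ≤ n ∧ hgt x j = m := by
  simp [visits]

theorem mem_peaks : j ∈ peaks x ↔ j ≤ n ∧ hgt x j = maxHgt x := mem_visits

theorem hgt_le_maxHgt_of_le (hj : j ≤ n) : hgt x j ≤ maxHgt x :=
  le_sup' (hgt x) (mem_range.2 (Nat.lt_succ_of_le hj))

theorem hgt_lt_hgt_of_lt (hj : n < j) : hgt x j < hgt x n := by
  rw [hgt_of_le x hj.le, hgt_of_le x le_rfl]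
  omega

theorem hgt_le_maxHgt (x : Fin n → Bool) (j : ℕ) : hgt x j ≤ maxHgt x := by
  rcases le_or_gt j n with hj | hj
  · exact hgt_le_maxHgt_of_le hj
  · exact (hgt_lt_hgt_of_lt hj).le.trans (hgt_le_maxHgt_of_le le_rfl)

theorem maxHgt_eq_of_forall_le {m : ℤ} (hle : ∀ j ≤ n, hgt x j ≤ m) (hm : hgt x j = m) :
    maxHgt x = m :=
  le_antisymm (sup'_le _ _ fun i hi => hle i (Nat.lt_succ_iff.1 (mem_range.1 hi)))
    (hm ▸ hgt_le_maxHgt x j)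

theorem peaks_nonempty (x : Fin n → Bool) : (peaks x).Nonempty := by
  obtain ⟨j, hj, h⟩ := exists_mem_eq_sup' nonempty_range_add_one (hgt x)
  exact ⟨j, mem_filter.2 ⟨hj, h.symm⟩⟩

theorem maxHgt_nonneg (x : Fin n → Bool) : 0 ≤ maxHgt x :=
  hgt_zero x ▸ hgt_le_maxHgt x 0

theorem bit_eq_false_of_mem_peaks (hj : j ∈ peaks x) (hjn : j < n) : x ⟨j, hjn⟩ = false :=
  bit_eq_false_of_hgt_succ_le hjn ((mem_peaks.1 hj).2 ▸ hgt_le_maxHgt x (j + 1))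

theorem maxHgt_revComp (x : Fin n → Bool) : maxHgt (revComp x) = maxHgt x - hgt x n := by
  obtain ⟨t, ht⟩ := peaks_nonempty x
  obtain ⟨htn, hgtt⟩ := mem_peaks.1 ht
  refine maxHgt_eq_of_forall_le (j := n - t) (fun j hj => ?_) ?_
  · rw [hgt_revComp x hj]
    linarith [hgt_le_maxHgt x (n - j)]
  · rw [hgt_revComp x (Nat.sub_le n t), Nat.sub_sub_self htn, hgtt]

theorem peaks_revComp (x : Fin n → Bool) : peaks (revComp x) = (peaks x).image (n - ·) := by
  ext j
  simp only [mem_image, mem_peaks, maxHgt_revComp]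
  constructor
  · rintro ⟨hj, h⟩
    rw [hgt_revComp x hj] at h
    exact ⟨n - j, ⟨Nat.sub_le n j, by linarith⟩, Nat.sub_sub_self hj⟩
  · rintro ⟨i, ⟨hi, h⟩, rfl⟩
    rw [hgt_revComp x (Nat.sub_le n i), Nat.sub_sub_self hi, h]
    exact ⟨Nat.sub_le n i, by ring⟩

theorem card_peaks_revComp (x : Fin n → Bool) : (peaks (revComp x)).card = (peaks x).card := by
  rw [peaks_revComp]
  refine card_image_of_injOn fun i hi i' hi' h => ?_
  have := (mem_peaks.1 hi).1
  have := (mem_peaks.1 hi').1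
  omega

theorem sup_id_mem {α : Type*} [LinearOrder α] [OrderBot α] {s : Finset α} (hs : s.Nonempty) :
    s.sup id ∈ s := by
  simpa using sup_mem_of_nonempty (f := id) hs

/-- In the lexical order the down-steps starting at the maximum height come first, followed by those
one level lower; so the 1-lexical matching flips the second-to-last peak if there are two peaks,
and otherwise the last visit to the height just below the maximum. -/
def matchPos (x : Fin n → Bool) : ℕ :=
  if 2 ≤ (peaks x).card then ((peaks x).erase ((peaks x).sup id)).sup id
  else (visits x (maxHgt x - 1)).sup id

theorem matchPos_of_two_le_card (hv : 2 ≤ (peaks x).card) :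
    ∃ T ∈ peaks x, matchPos x ∈ peaks x ∧ matchPos x < T ∧
      ∀ j ∈ peaks x, j ≤ matchPos x ∨ j = T := by
  set T := (peaks x).sup id
  have hT : T ∈ peaks x := sup_id_mem (peaks_nonempty x)
  have hne : ((peaks x).erase T).Nonempty := by
    rw [← card_pos, card_erase_of_mem hT]
    omega
  have hd : matchPos x ∈ (peaks x).erase T := by
    rw [matchPos, if_pos hv]
    exact sup_id_mem hne
  refine ⟨T, hT, mem_of_mem_erase hd,
    lt_of_le_of_ne (le_sup (f := id) (mem_of_mem_erase hd)) (ne_of_mem_erase hd), fun j hj => ?_⟩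
  by_cases hjT : j = T
  · exact Or.inr hjT
  · left
    rw [matchPos, if_pos hv]
    exact le_sup (f := id) (mem_erase.2 ⟨hjT, hj⟩)

theorem matchPos_eq_of_mem_peaks {d T : ℕ} (hd : d ∈ peaks x) (hT : T ∈ peaks x) (hdT : d < T)
    (h : ∀ j ∈ peaks x, j ≤ d ∨ j = T) : matchPos x = d := by
  have hv : 2 ≤ (peaks x).card := one_lt_card.2 ⟨d, hd, T, hT, hdT.ne⟩
  have hsup : (peaks x).sup id = T := sup_eq_of_isMaxOn hT fun j hj => show j ≤ T by
    rcases h j hj with h | h <;> omega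
  rw [matchPos, if_pos hv, hsup]
  refine sup_eq_of_isMaxOn (mem_erase.2 ⟨hdT.ne, hd⟩) fun j hj => ?_
  exact (h j (mem_of_mem_erase hj)).resolve_right (ne_of_mem_erase hj)

theorem matchPos_of_peaks_eq_singleton {t : ℕ} (hv : peaks x = {t})
    (hf : hgt x n ≤ maxHgt x - 2) :
    t < matchPos x ∧ matchPos x < n ∧ hgt x (matchPos x) = maxHgt x - 1 ∧
      ∀ j ≤ n, hgt x j = maxHgt x - 1 → j ≤ matchPos x := by
  have ht : t ∈ peaks x := hv ▸ mem_singleton_self t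
  obtain ⟨htn, hgtt⟩ := mem_peaks.1 ht
  have htlt : t < n := lt_of_le_of_ne htn fun h => by subst h; omega
  have ht1 : hgt x (t + 1) = maxHgt x - 1 := by
    rw [hgt_succ x htlt, bit_eq_false_of_mem_peaks ht htlt, hgtt]
    rfl
  have hmem : t + 1 ∈ visits x (maxHgt x - 1) := mem_visits.2 ⟨htlt, ht1⟩
  have hq : matchPos x ∈ visits x (maxHgt x - 1) := by
    rw [matchPos, if_neg (by simp [hv])]
    exact sup_id_mem ⟨_, hmem⟩
  have hmax : ∀ j ≤ n, hgt x j = maxHgt x - 1 → j ≤ matchPos x := fun j hj h => by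
    rw [matchPos, if_neg (by simp [hv])]
    exact le_sup (f := id) (mem_visits.2 ⟨hj, h⟩)
  obtain ⟨hqn, hgtq⟩ := mem_visits.1 hq
  have := hmax _ htlt ht1
  exact ⟨by omega, lt_of_le_of_ne hqn fun h => by rw [h] at hgtq; omega, hgtq, hmax⟩

theorem matchPos_eq_of_peaks_eq_singleton {t q : ℕ} (hv : peaks x = {t}) (hqn : q ≤ n)
    (hq : hgt x q = maxHgt x - 1) (hmax : ∀ j ≤ n, hgt x j = maxHgt x - 1 → j ≤ q) :
    matchPos x = q := by
  rw [matchPos, if_neg (by simp [hv])]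
  exact sup_eq_of_isMaxOn (mem_visits.2 ⟨hqn, hq⟩) fun j hj => hmax j (mem_visits.1 hj).1
    (mem_visits.1 hj).2

def IsMatched (x : Fin n → Bool) : Prop := 2 ≤ (peaks x).card ∨ hgt x n ≤ maxHgt x - 2

def IsBottom (x : Fin n → Bool) : Prop := (peaks x).card = 1 ∧ maxHgt x ≤ 1

def matchUp (x : Fin n → Bool) : Fin n → Bool := setBit x (matchPos x)

def matchDown (y : Fin n → Bool) : Fin n → Bool := revComp (matchUp (revComp y))

theorem one_le_card_peaks (x : Fin n → Bool) : 1 ≤ (peaks x).card :=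
  card_pos.2 (peaks_nonempty x)

theorem isMatched_iff_not_isBottom_revComp : IsMatched x ↔ ¬ IsBottom (revComp x) := by
  rw [IsMatched, IsBottom, card_peaks_revComp, maxHgt_revComp]
  have := one_le_card_peaks x
  omega

theorem IsMatched.two_le_card_or_eq_singleton (hm : IsMatched x) :
    2 ≤ (peaks x).card ∨ ∃ t, peaks x = {t} ∧ hgt x n ≤ maxHgt x - 2 := by
  rcases hm with hv | hf
  · exact Or.inl hv
  by_cases hv : 2 ≤ (peaks x).card
  · exact Or.inl hv
  · have := one_le_card_peaks x
    obtain ⟨t, ht⟩ := card_eq_one.1 (show (peaks x).card = 1 by omega)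
    exact Or.inr ⟨t, ht, hf⟩

theorem matchPos_lt (hm : IsMatched x) : matchPos x < n := by
  rcases hm.two_le_card_or_eq_singleton with hv | ⟨t, hv, hf⟩
  · obtain ⟨T, hT, -, hdT, -⟩ := matchPos_of_two_le_card hv
    exact hdT.trans_le (mem_peaks.1 hT).1
  · exact (matchPos_of_peaks_eq_singleton hv hf).2.1

theorem bit_matchPos (hm : IsMatched x) : x ⟨matchPos x, matchPos_lt hm⟩ = false := by
  rcases hm.two_le_card_or_eq_singleton with hv | ⟨t, hv, hf⟩
  · obtain ⟨-, -, hd, -⟩ := matchPos_of_two_le_card hv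
    exact bit_eq_false_of_mem_peaks hd _
  · obtain ⟨htq, -, hgtq, -⟩ := matchPos_of_peaks_eq_singleton hv hf
    refine bit_eq_false_of_hgt_succ_le _ ?_
    have hne : matchPos x + 1 ∉ peaks x := by rw [hv, mem_singleton]; omega
    rw [mem_peaks, not_and] at hne
    have := hne (matchPos_lt hm)
    have := hgt_le_maxHgt x (matchPos x + 1)
    omega

theorem wt_matchUp (hm : IsMatched x) : wt (matchUp x) = wt x + 1 :=
  wt_setBit (matchPos_lt hm) (bit_matchPos hm)

theorem hgt_matchUp (hm : IsMatched x) (j : ℕ) :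
    hgt (matchUp x) j = hgt x j + if matchPos x < j then 2 else 0 :=
  hgt_setBit (matchPos_lt hm) (bit_matchPos hm) j

theorem hgt_matchPos_succ (hm : IsMatched x) : hgt x (matchPos x + 1) = hgt x (matchPos x) - 1 := by
  rw [hgt_succ x (matchPos_lt hm), bit_matchPos hm]
  rfl

theorem matchUp_of_two_le_card (hv : 2 ≤ (peaks x).card) :
    maxHgt (matchUp x) = maxHgt x + 2 ∧ ∃ T, peaks (matchUp x) = {T} := by
  obtain ⟨T, hT, -, hdT, hpeaks⟩ := matchPos_of_two_le_card hv
  obtain ⟨hTn, hgtT⟩ := mem_peaks.1 hT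
  have hy := hgt_matchUp (Or.inl hv)
  have hmax : maxHgt (matchUp x) = maxHgt x + 2 := by
    refine maxHgt_eq_of_forall_le (fun j _ => ?_) (j := T) (by rw [hy, if_pos hdT, hgtT])
    have := hgt_le_maxHgt x j
    rw [hy]
    split_ifs <;> omega
  refine ⟨hmax, T, ?_⟩
  ext j
  rw [mem_peaks, hmax, hy, mem_singleton]
  constructor
  · rintro ⟨hj, h⟩
    have := hgt_le_maxHgt x j
    split_ifs at h with hdj
    · exact (hpeaks j (mem_peaks.2 ⟨hj, by omega⟩)).resolve_left (by omega)
    · omega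
  · rintro rfl
    exact ⟨hTn, by rw [if_pos hdT, hgtT]⟩

theorem matchUp_of_peaks_eq_singleton {t : ℕ} (hv : peaks x = {t})
    (hf : hgt x n ≤ maxHgt x - 2) :
    maxHgt (matchUp x) = maxHgt x ∧ t ∈ peaks (matchUp x) ∧ matchPos x + 1 ∈ peaks (matchUp x) ∧
      ∀ j ∈ peaks (matchUp x), j = t ∨ matchPos x + 1 ≤ j := by
  obtain ⟨htq, hqn, hgtq, hqmax⟩ := matchPos_of_peaks_eq_singleton hv hf
  have hm : IsMatched x := Or.inr hf
  have hy := hgt_matchUp hm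
  obtain ⟨htn, hgtt⟩ := mem_peaks.1 (hv ▸ mem_singleton_self t)
  have hq1 := hgt_matchPos_succ hm
  have hbelow : ∀ j ≤ n, matchPos x < j → hgt x j ≤ maxHgt x - 2 := fun j hj hqj => by
    have hne : j ∉ peaks x := by rw [hv, mem_singleton]; omega
    rw [mem_peaks, not_and] at hne
    have := hne hj
    have := hgt_le_maxHgt x j
    have := mt (hqmax j hj) (by omega)
    omega
  have hmax : maxHgt (matchUp x) = maxHgt x := by
    refine maxHgt_eq_of_forall_le (j := t) (fun j hj => ?_)
      (by rw [hy, if_neg (by omega), hgtt, add_zero])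
    have := hgt_le_maxHgt x j
    rw [hy]
    split_ifs with h
    · linarith [hbelow j hj h]
    · omega
  refine ⟨hmax, ?_, ?_, fun j hj => ?_⟩
  · exact mem_peaks.2 ⟨htn, by rw [hmax, hy, if_neg (by omega), hgtt, add_zero]⟩
  · exact mem_peaks.2 ⟨hqn, by rw [hmax, hy, if_pos (by omega), hq1, hgtq]; ring⟩
  · obtain ⟨hjn, h⟩ := mem_peaks.1 hj
    rw [hmax, hy] at h
    split_ifs at h with hqj
    · exact Or.inr hqj
    · rw [add_zero] at h
      exact Or.inl (mem_singleton.1 (hv ▸ mem_peaks.2 ⟨hjn, h⟩))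

theorem matchUp_of_card_eq_one (hv : (peaks x).card = 1)
    (hf : hgt x n ≤ maxHgt x - 2) :
    maxHgt (matchUp x) = maxHgt x ∧ 2 ≤ (peaks (matchUp x)).card := by
  obtain ⟨t, ht⟩ := card_eq_one.1 hv
  obtain ⟨hmax, ht', hq', -⟩ := matchUp_of_peaks_eq_singleton ht hf
  have := (matchPos_of_peaks_eq_singleton ht hf).1
  exact ⟨hmax, one_lt_card.2 ⟨t, ht', _, hq', by omega⟩⟩

theorem not_isBottom_matchUp (hm : IsMatched x) : ¬ IsBottom (matchUp x) := by
  rintro ⟨h1, h2⟩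
  rcases hm.two_le_card_or_eq_singleton with hv | ⟨t, hv, hf⟩
  · have := (matchUp_of_two_le_card hv).1
    have := maxHgt_nonneg x
    omega
  · have := (matchUp_of_card_eq_one (by simp [hv]) hf).2
    omega

theorem matchPos_revComp_matchUp (hm : IsMatched x) :
    matchPos (revComp (matchUp x)) = n - 1 - matchPos x := by
  have hqn := matchPos_lt hm
  rcases hm.two_le_card_or_eq_singleton with hv | ⟨t, hv, hf⟩
  · obtain ⟨hmax, T, hT⟩ := matchUp_of_two_le_card hv
    obtain ⟨-, -, hd, -⟩ := matchPos_of_two_le_card hv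
    refine matchPos_eq_of_peaks_eq_singleton (t := n - T)
      (by rw [peaks_revComp, hT, image_singleton]) (by omega) ?_ fun j hj h => ?_
    · rw [hgt_revComp _ (by omega), maxHgt_revComp, hmax, show n - (n - 1 - matchPos x) =
        matchPos x + 1 by omega, hgt_matchUp hm, if_pos (Nat.lt_succ_self _), hgt_matchPos_succ hm,
        (mem_peaks.1 hd).2]
      ring
    · rw [hgt_revComp _ hj, maxHgt_revComp, hmax, hgt_matchUp hm] at h
      have := hgt_le_maxHgt x (n - j)
      split_ifs at h <;> omega
  · obtain ⟨-, ht, hq, hpeaks⟩ := matchUp_of_peaks_eq_singleton hv hf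
    have := (matchPos_of_peaks_eq_singleton hv hf).1
    refine matchPos_eq_of_mem_peaks (T := n - t) ?_ ?_ (by omega) ?_
    · rw [peaks_revComp]
      exact mem_image.2 ⟨_, hq, by omega⟩
    · rw [peaks_revComp]
      exact mem_image_of_mem _ ht
    · rw [peaks_revComp]
      intro j hj
      obtain ⟨i, hi, rfl⟩ := mem_image.1 hj
      rcases hpeaks i hi with rfl | h
      · exact Or.inr rfl
      · exact Or.inl (by omega)

theorem matchUp_revComp_matchUp (hm : IsMatched x) :
    matchUp (revComp (matchUp x)) = revComp x := by
  rw [matchUp, matchPos_revComp_matchUp hm]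
  exact revComp_setBit (matchPos_lt hm) (bit_matchPos hm)

theorem matchDown_matchUp (hm : IsMatched x) : matchDown (matchUp x) = x := by
  rw [matchDown, matchUp_revComp_matchUp hm, revComp_revComp]

theorem isMatched_matchDown {y : Fin n → Bool} (hy : ¬ IsBottom y) : IsMatched (matchDown y) := by
  rw [isMatched_iff_not_isBottom_revComp, matchDown, revComp_revComp]
  exact not_isBottom_matchUp (isMatched_iff_not_isBottom_revComp.2 (by rwa [revComp_revComp]))

theorem matchUp_matchDown {y : Fin n → Bool} (hy : ¬ IsBottom y) : matchUp (matchDown y) = y := by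
  have hm : IsMatched (revComp y) := isMatched_iff_not_isBottom_revComp.2 (by rwa [revComp_revComp])
  rw [matchDown, matchUp_revComp_matchUp hm, revComp_revComp]

/-- The down-steps of `x^↑` that come before `d` in the order defining the lexical matchings. -/
def precedingDownSteps (x : Fin n → Bool) (d : ℕ) : Set ℕ :=
  {j | isDownStep x j ∧ (hgt x d < hgt x j ∨ (hgt x j = hgt x d ∧ d < j))}

theorem isDownStep_iff_of_lt (hj : j < n) : isDownStep x j ↔ x ⟨j, hj⟩ = false :=
  ⟨fun h => h.2 hj, fun h => ⟨hj.trans_le (le_max_left _ _), fun _ => h⟩⟩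

theorem isDownStep_iff_of_le (hj : n ≤ j) : isDownStep x j ↔ 0 ≤ hgt x j := by
  rw [hgt_of_le x hj, isDownStep, extLen]
  constructor
  · rintro ⟨h, -⟩
    rcases max_cases n (2 * wt x + 1) with ⟨h', -⟩ | ⟨h', -⟩ <;> omega
  · exact fun h => ⟨lt_max_of_lt_right (by omega), fun h' => absurd h' (by omega)⟩

theorem isDownStep_of_mem_peaks (hj : j ∈ peaks x) : isDownStep x j := by
  obtain ⟨hjn, h⟩ := mem_peaks.1 hj
  rcases hjn.lt_or_eq with hjn | rfl
  · exact (isDownStep_iff_of_lt hjn).2 (bit_eq_false_of_mem_peaks hj hjn)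
  · exact (isDownStep_iff_of_le le_rfl).2 (h ▸ maxHgt_nonneg x)

theorem mem_peaks_of_hgt_eq (h : hgt x j = maxHgt x) : j ∈ peaks x := by
  refine mem_peaks.2 ⟨not_lt.1 fun hjn => ?_, h⟩
  linarith [hgt_lt_hgt_of_lt (x := x) hjn, hgt_le_maxHgt x n]

theorem precedingDownSteps_finite (x : Fin n → Bool) (d : ℕ) :
    (precedingDownSteps x d).Finite :=
  (Set.finite_Iio (extLen x)).subset fun _ hj => hj.1.1

theorem ncard_precedingDownSteps_lt {a b : ℕ} (hab : a ∈ precedingDownSteps x b) :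
    (precedingDownSteps x a).ncard < (precedingDownSteps x b).ncard := by
  have hsub : insert a (precedingDownSteps x a) ⊆ precedingDownSteps x b := by
    rintro j (rfl | ⟨hj, h⟩)
    · exact hab
    · exact ⟨hj, by rcases hab.2 with h' | h' <;> rcases h with h | h <;> omega⟩
  have hnot : a ∉ precedingDownSteps x a := fun ⟨_, h⟩ => by omega
  have := Set.ncard_le_ncard hsub (precedingDownSteps_finite x b)
  rwa [Set.ncard_insert_of_notMem hnot (precedingDownSteps_finite x a)] at this

theorem eq_of_ncard_precedingDownSteps_eq_one {d d' : ℕ} (hd : isDownStep x d)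
    (hd' : isDownStep x d') (h : (precedingDownSteps x d).ncard = 1)
    (h' : (precedingDownSteps x d').ncard = 1) : d = d' := by
  by_contra hne
  have : d ∈ precedingDownSteps x d' ∨ d' ∈ precedingDownSteps x d := by
    rcases lt_trichotomy (hgt x d) (hgt x d') with hlt | heq | hgt
    · exact Or.inr ⟨hd', Or.inl hlt⟩
    · rcases Nat.lt_or_gt_of_ne hne with hlt | hlt
      · exact Or.inr ⟨hd', Or.inr ⟨heq.symm, hlt⟩⟩
      · exact Or.inl ⟨hd, Or.inr ⟨heq, hlt⟩⟩
    · exact Or.inl ⟨hd, Or.inl hgt⟩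
  rcases this with h'' | h'' <;> have := ncard_precedingDownSteps_lt h'' <;> omega

theorem ncard_precedingDownSteps_matchPos (hm : IsMatched x) :
    (precedingDownSteps x (matchPos x)).ncard = 1 := by
  rw [Set.ncard_eq_one]
  rcases hm.two_le_card_or_eq_singleton with hv | ⟨t, hv, hf⟩
  · obtain ⟨T, hT, hd, hdT, hpeaks⟩ := matchPos_of_two_le_card hv
    refine ⟨T, Set.eq_singleton_iff_unique_mem.2 ⟨⟨isDownStep_of_mem_peaks hT, Or.inr
      ⟨(mem_peaks.1 hT).2.trans (mem_peaks.1 hd).2.symm, hdT⟩⟩, fun j ⟨_, h⟩ => ?_⟩⟩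
    rw [(mem_peaks.1 hd).2] at h
    have := hgt_le_maxHgt x j
    rcases h with h | ⟨h, hdj⟩
    · omega
    · exact (hpeaks j (mem_peaks_of_hgt_eq h)).resolve_left (by omega)
  · obtain ⟨htq, -, hgtq, hqmax⟩ := matchPos_of_peaks_eq_singleton hv hf
    have ht : t ∈ peaks x := hv ▸ mem_singleton_self t
    refine ⟨t, Set.eq_singleton_iff_unique_mem.2 ⟨⟨isDownStep_of_mem_peaks ht, Or.inl
      (by rw [hgtq, (mem_peaks.1 ht).2]; omega)⟩, fun j ⟨_, h⟩ => ?_⟩⟩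
    rw [hgtq] at h
    have := hgt_le_maxHgt x j
    rcases h with h | ⟨h, hqj⟩
    · exact mem_singleton.1 (hv ▸ mem_peaks_of_hgt_eq (by omega))
    · rcases le_or_gt j n with hjn | hjn
      · exact absurd (hqmax j hjn h) (by omega)
      · linarith [hgt_lt_hgt_of_lt (x := x) hjn]

theorem precedingDownSteps_eq_empty {t : ℕ} (hv : peaks x = {t}) : precedingDownSteps x t = ∅ := by
  refine Set.eq_empty_of_forall_notMem fun j ⟨_, h⟩ => ?_
  rw [(mem_peaks.1 (hv ▸ mem_singleton_self t)).2] at h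
  rcases h with h | ⟨h, htj⟩
  · linarith [hgt_le_maxHgt x j]
  · exact htj.ne' (mem_singleton.1 (hv ▸ mem_peaks_of_hgt_eq h))

/-- If `t = n`, then `n` and `n + 1` precede `d`; otherwise `t` and `n` do, where `n` is a
down-step of `x^↑` because the final height `M - 1` is even, hence nonnegative. -/
theorem one_lt_ncard_precedingDownSteps (he : Even n) {t d : ℕ} (hv : peaks x = {t})
    (hf : maxHgt x - 1 ≤ hgt x n) (hdn : d < n) (hdt : d ≠ t) :
    1 < (precedingDownSteps x d).ncard := by
  have ht : t ∈ peaks x := hv ▸ mem_singleton_self t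
  obtain ⟨htn, hgtt⟩ := mem_peaks.1 ht
  have hle := hgt_le_maxHgt x
  have hdM : hgt x d < maxHgt x := lt_of_le_of_ne (hle d) fun h =>
    hdt (mem_singleton.1 (hv ▸ mem_peaks_of_hgt_eq h))
  refine (Set.one_lt_ncard (precedingDownSteps_finite x d)).2 ?_
  rcases hf.lt_or_eq with hfM | hfM
  · obtain rfl : n = t :=
      mem_singleton.1 (hv ▸ mem_peaks_of_hgt_eq (le_antisymm (hle n) (by omega)))
    have hM : 1 ≤ maxHgt x := by
      by_contra h
      have := mem_singleton.1 (hv ▸ mem_peaks_of_hgt_eq (j := 0)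
        (by rw [hgt_zero]; linarith [maxHgt_nonneg x]))
      omega
    have hn1 : hgt x (n + 1) = maxHgt x - 1 := by
      rw [hgt_of_le x (by omega), ← hgtt, hgt_of_le x le_rfl]
      push_cast
      ring
    refine ⟨n, ⟨isDownStep_of_mem_peaks ht, Or.inl (by omega)⟩, n + 1, ⟨(isDownStep_iff_of_le
      (by omega)).2 (by omega), ?_⟩, by omega⟩
    rcases (show hgt x d ≤ hgt x (n + 1) by omega).lt_or_eq with h | h
    · exact Or.inl h
    · exact Or.inr ⟨h.symm, by omega⟩
  · have hpar : Even (hgt x n) := by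
      rw [hgt_of_le x le_rfl]
      exact (even_two_mul _).sub (Int.even_coe_nat n |>.2 he)
    have hn0 : 0 ≤ hgt x n := by
      obtain ⟨k, hk⟩ := hpar
      have := maxHgt_nonneg x
      omega
    refine ⟨t, ⟨isDownStep_of_mem_peaks ht, Or.inl (by omega)⟩, n, ⟨(isDownStep_iff_of_le
      le_rfl).2 hn0, ?_⟩, fun h => by subst h; omega⟩
    rcases (show hgt x d ≤ hgt x n by omega).lt_or_eq with h | h
    · exact Or.inl h
    · exact Or.inr ⟨h.symm, hdn⟩

theorem ncard_precedingDownSteps_ne_one (he : Even n) (hm : ¬ IsMatched x) {d : ℕ} (hdn : d < n) :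
    (precedingDownSteps x d).ncard ≠ 1 := by
  rw [IsMatched, not_or, not_le, not_le] at hm
  have := one_le_card_peaks x
  obtain ⟨t, hv⟩ := card_eq_one.1 (show (peaks x).card = 1 by omega)
  by_cases hdt : d = t
  · rw [hdt, precedingDownSteps_eq_empty hv, Set.ncard_empty]
    exact zero_ne_one
  · exact (one_lt_ncard_precedingDownSteps he hv (by omega) hdn hdt).ne'

theorem lexUp_one_iff (he : Even n) {k : ℕ} {y : Fin n → Bool} :
    lexUp n k 1 x y ↔ wt x = k ∧ IsMatched x ∧ y = matchUp x := by
  have hpos : ∀ hm : IsMatched x, isDownStep x (matchPos x) := fun hm =>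
    (isDownStep_iff_of_lt (matchPos_lt hm)).2 (bit_matchPos hm)
  constructor
  · rintro ⟨hwt, d, hdn, hd, hcard, rfl⟩
    have hm : IsMatched x := by_contra fun hm => ncard_precedingDownSteps_ne_one he hm hdn hcard
    obtain rfl := eq_of_ncard_precedingDownSteps_eq_one hd (hpos hm) hcard
      (ncard_precedingDownSteps_matchPos hm)
    exact ⟨hwt, hm, rfl⟩
  · rintro ⟨rfl, hm, rfl⟩
    exact ⟨rfl, matchPos x, matchPos_lt hm, hpos hm, ncard_precedingDownSteps_matchPos hm, rfl⟩

theorem wt_le (x : Fin n → Bool) : wt x ≤ n :=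
  (card_le_univ _).trans_eq (Fintype.card_fin n)

theorem cube_adj_matchUp (hm : IsMatched x) : (cube n).Adj x (matchUp x) :=
  hammingDist_setBit (matchPos_lt hm) (bit_matchPos hm)

variable {b : Fin n → Bool}

theorem two_mul_wt_le_of_isBottom (he : Even n) (hb : IsBottom b) : 2 * wt b ≤ n := by
  have h := hgt_le_maxHgt b n
  rw [hgt_of_le b le_rfl] at h
  obtain ⟨k, rfl⟩ := he
  have := hb.2
  omega

theorem iterate_matchUp_two_mul (hb : IsBottom b) {m : ℕ} (hm : 2 * m ≤ n - 2 * wt b) :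
    (peaks (matchUp^[2 * m] b)).card = 1 ∧ maxHgt (matchUp^[2 * m] b) = maxHgt b + 2 * m ∧
      wt (matchUp^[2 * m] b) = wt b + 2 * m := by
  induction m with
  | zero => exact ⟨hb.1, by simp, by simp⟩
  | succ m ih =>
    obtain ⟨h1, hmax, hwt⟩ := ih (by omega)
    have hf : hgt (matchUp^[2 * m] b) n ≤ maxHgt (matchUp^[2 * m] b) - 2 := by
      rw [hgt_of_le _ le_rfl, hmax, hwt]
      have := maxHgt_nonneg b
      push_cast
      omega
    obtain ⟨hmax', h2⟩ := matchUp_of_card_eq_one h1 hf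
    obtain ⟨hmax'', T, hT⟩ := matchUp_of_two_le_card h2
    rw [show 2 * (m + 1) = 2 * m + 1 + 1 by ring, Function.iterate_succ_apply',
      Function.iterate_succ_apply']
    refine ⟨by rw [hT, card_singleton], by rw [hmax'', hmax', hmax]; push_cast; ring, ?_⟩
    rw [wt_matchUp (Or.inl h2), wt_matchUp (Or.inr hf), hwt]
    ring

theorem isMatched_iterate_matchUp (he : Even n) (hb : IsBottom b) {i : ℕ}
    (hi : i < n - 2 * wt b) : IsMatched (matchUp^[i] b) := by
  have hL := two_mul_wt_le_of_isBottom he hb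
  obtain ⟨m, rfl | rfl⟩ := Nat.even_or_odd' i
  all_goals
    obtain ⟨h1, hmax, hwt⟩ := iterate_matchUp_two_mul hb (m := m) (by omega)
    have hf : hgt (matchUp^[2 * m] b) n ≤ maxHgt (matchUp^[2 * m] b) - 2 := by
      obtain ⟨k, rfl⟩ := he
      rw [hgt_of_le _ le_rfl, hmax, hwt]
      have := maxHgt_nonneg b
      push_cast
      omega
  · exact Or.inr hf
  · rw [Function.iterate_succ_apply']
    exact Or.inl (matchUp_of_card_eq_one h1 hf).2

theorem not_isMatched_iterate_matchUp (he : Even n) (hb : IsBottom b) :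
    ¬ IsMatched (matchUp^[n - 2 * wt b] b) := by
  have hL := two_mul_wt_le_of_isBottom he hb
  obtain ⟨k, rfl⟩ := he
  rw [show k + k - 2 * wt b = 2 * (k - wt b) by omega]
  obtain ⟨h1, hmax, hwt⟩ := iterate_matchUp_two_mul hb (m := k - wt b) (by omega)
  rintro (h | h)
  · omega
  · rw [hgt_of_le _ le_rfl, hmax, hwt] at h
    have := hb.2
    push_cast at h
    omega

def lexChains (he : Even n) : ChainSystem (Fin n → Bool) where
  up := matchUp
  down := matchDown
  IsMatched := IsMatched
  IsBottom := IsBottom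
  rank := wt
  len b := n - 2 * wt b
  down_up _ := matchDown_matchUp
  not_isBottom_up _ := not_isBottom_matchUp
  isMatched_down _ := isMatched_matchDown
  up_down _ := matchUp_matchDown
  rank_up _ := wt_matchUp
  isMatched_iterate _ hb _ := isMatched_iterate_matchUp he hb
  not_isMatched_iterate_len _ hb := not_isMatched_iterate_matchUp he hb

theorem isSymChain_chain (he : Even n) (hb : IsBottom b) :
    IsSymChain n ((lexChains he).chain b) := by
  set S := lexChains he
  have hlen : S.len b = n - 2 * wt b := rfl
  refine ⟨List.ne_nil_of_length_pos (by simp), ?_, wt b, fun i hi => ?_, ?_⟩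
  · change List.IsChain (cube n).Adj (S.chain b)
    refine List.isChain_iff_getElem.2 fun i hi => ?_
    rw [S.getElem_chain, S.getElem_chain, Function.iterate_succ_apply']
    rw [S.length_chain] at hi
    exact cube_adj_matchUp (isMatched_iterate_matchUp he hb (by omega))
  · rw [S.length_chain] at hi
    rw [List.get_eq_getElem, S.getElem_chain]
    exact S.rank_iterate hb (Nat.lt_succ_iff.1 hi)
  · have := two_mul_wt_le_of_isBottom he hb
    rw [S.length_chain, Nat.add_sub_cancel, hlen]
    omega

theorem scdEdges_chain (he : Even n) :
    scdEdges ((lexChains he).chain '' {b | IsBottom b}) =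
      {e | ∃ k < n, ∃ x y : Fin n → Bool, lexUp n k 1 x y ∧ e = s(x, y)} := by
  refine (lexChains he).biUnion_chainEdges_chain.trans ?_
  ext e
  simp only [Set.mem_ofPred_eq, lexUp_one_iff he]
  constructor
  · rintro ⟨x, hm, rfl⟩
    have := wt_matchUp hm ▸ wt_le (matchUp x)
    exact ⟨wt x, by omega, x, _, ⟨rfl, hm, rfl⟩, rfl⟩
  · rintro ⟨k, -, x, y, ⟨-, hm, rfl⟩, rfl⟩
    exact ⟨x, hm, rfl⟩

end LexicalMatching

theorem lexical1_is_SCD_general (n : ℕ) (he : Even n) :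
    ∃ D : Set (List (Fin n → Bool)), IsSCD n D ∧
      scdEdges D = {e : Sym2 (Fin n → Bool) |
        ∃ k < n, ∃ x y : Fin n → Bool, lexUp n k 1 x y ∧ e = s(x, y)} := by
  open LexicalMatching in
  exact ⟨(lexChains he).chain '' {b | IsBottom b},
    ⟨fun _ ⟨_, hb, hc⟩ => hc ▸ isSymChain_chain he hb, (lexChains he).existsUnique_mem_chain⟩,
    scdEdges_chain he⟩

/-- For any even `n ≥ 2`, the spanning subgraph of the `n`-cube with edge set
`⋃_{k=0}^{n−1} M^1_{n,k}` is a disjoint union of symmetric chains: there is a symmetric chain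
decomposition of the `n`-cube whose chain edges are exactly the edges of the 1-lexical
matchings; consequently every connected component of this subgraph is a symmetric chain. -/
theorem lexical1_is_SCD (n : ℕ) (hn : 2 ≤ n) (he : Even n) :
    ∃ D : Set (List (Fin n → Bool)), IsSCD n D ∧
      scdEdges D = {e : Sym2 (Fin n → Bool) |
        ∃ k < n, ∃ x y : Fin n → Bool, lexUp n k 1 x y ∧ e = s(x, y)} :=
  lexical1_is_SCD_general n he
end

section
/- Let n ≥ 1 and let i = (i_0, …, i_{n−1}) and j = (j_0, …, j_{n−1}) be sequences of integers with 0 ≤ i_k ≤ max{k, n−k−1} and 0 ≤ j_k ≤ max{k, n−k−1} for each k. Then the edge sets ⋃_{k=0}^{n−1} M^{i_k}_{n,k} and ⋃_{k=0}^{n−1} M^{j_k}_{n,k} are disjoint if and only if i_k ≠ j_k for every k = 0, 1, …, n−1. -/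
/-! Both directions rest on the fact that an edge `{x, y}` of `Q_n` carries its own labels:
the lower endpoint has weight `k`, and the flipped bit fixes the down-step of `x^↑` whose rank
is `i`. So the edge lies in `M^i_{n,k}` for at most one pair `(k, i)`, which makes the unions
disjoint when `i_k ≠ j_k` for all `k`. Conversely every `M^i_{n,k}` with `i ≤ max{k, n−k−1}`
is nonempty: for `k + i < n` take `x = 1^k 0^(n−k)`, whose down-steps start at strictly
decreasing heights, and for `i ≤ k` take `x = 1^(k−i) 0 1^i 0^(n−k−1)`, whose zero at position
`k − i` is preceded in the order exactly by the down-steps at positions `k + 1, …, k + i`. -/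

section Lexical

variable {n : ℕ}

lemma wt_flip (x : Fin n → Bool) {d : ℕ} (hd : d < n) (hx : x ⟨d, hd⟩ = false) :
    wt (fun t : Fin n => if t.val = d then true else x t) = wt x + 1 := by
  have hfilter : (Finset.univ.filter fun t : Fin n => (if t.val = d then true else x t) = true)
      = insert ⟨d, hd⟩ (Finset.univ.filter fun t => x t = true) := by
    ext t
    by_cases ht : t.val = d <;> simp [ht, Fin.ext_iff]
  rw [wt, wt, hfilter, Finset.card_insert_of_notMem (by simp [hx])]

lemma lexUp_wt_right {k i : ℕ} {x y : Fin n → Bool} (h : lexUp n k i x y) : wt y = k + 1 := by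
  obtain ⟨hx, d, hdn, hd, -, rfl⟩ := h
  rw [wt_flip x hdn (hd.2 hdn), hx]

lemma lexUp_asymm {k k' i i' : ℕ} {x y : Fin n → Bool}
    (h : lexUp n k i x y) (h' : lexUp n k' i' y x) : False := by
  linarith [lexUp_wt_right h, lexUp_wt_right h', h.1, h'.1]

lemma lexUp_unique {k k' i i' : ℕ} {x y : Fin n → Bool}
    (h : lexUp n k i x y) (h' : lexUp n k' i' x y) : k = k' ∧ i = i' := by
  obtain ⟨rfl, d, hdn, hd, rfl, rfl⟩ := h
  obtain ⟨hk, d', -, -, rfl, hy⟩ := h'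
  have hdd : d = d' := by
    by_contra hne
    have := congrFun hy ⟨d, hdn⟩
    simp [hne, hd.2 hdn] at this
  exact ⟨hk, by rw [hdd]⟩

lemma onesUpTo_self (x : Fin n → Bool) : onesUpTo x n = wt x := by
  simp only [onesUpTo, wt, Fin.is_lt, true_and]

variable (n) in
def ofSupport (S : Finset ℕ) : Fin n → Bool := fun t => decide (t.val ∈ S)

variable {S : Finset ℕ}

lemma onesUpTo_ofSupport (hS : ∀ t ∈ S, t < n) (j : ℕ) :
    onesUpTo (ofSupport n S) j = (S.filter (· < j)).card := by
  rw [onesUpTo, ← Finset.card_map Fin.valEmbedding]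
  congr 1
  ext t
  simp only [ofSupport, Finset.mem_map, Finset.mem_filter, Finset.mem_univ, true_and,
    decide_eq_true_eq, Fin.valEmbedding_apply]
  constructor
  · rintro ⟨t, ⟨htj, htS⟩, rfl⟩
    exact ⟨htS, htj⟩
  · rintro ⟨htS, htj⟩
    exact ⟨⟨t, hS t htS⟩, ⟨htj, htS⟩, rfl⟩

lemma wt_ofSupport (hS : ∀ t ∈ S, t < n) : wt (ofSupport n S) = S.card := by
  rw [← onesUpTo_self, onesUpTo_ofSupport hS, Finset.filter_true_of_mem hS]

lemma isDownStep_ofSupport (hS : ∀ t ∈ S, t < n) (j : ℕ) :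
    isDownStep (ofSupport n S) j ↔ j < max n (2 * S.card + 1) ∧ j ∉ S := by
  simp only [isDownStep, extLen, wt_ofSupport hS, ofSupport, decide_eq_false_iff_not]
  exact and_congr_right fun _ => ⟨fun h hj => h (hS j hj) hj, fun h _ => h⟩

lemma exists_lexUp_of_add_lt {k i : ℕ} (hki : k + i < n) : ∃ x y, lexUp n k i x y := by
  have hS : ∀ t ∈ Finset.range k, t < n := fun t ht => by simp at ht; omega
  have hgt_eq (j : ℕ) : hgt (ofSupport n (Finset.range k)) j = 2 * (min j k : ℤ) - j := by
    rw [hgt, onesUpTo_ofSupport hS, show (Finset.range k).filter (· < j) = Finset.range (min j k)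
      by ext t; simp only [Finset.mem_filter, Finset.mem_range, lt_min_iff]; omega,
      Finset.card_range]
    push_cast; ring
  refine ⟨_, _, by rw [wt_ofSupport hS, Finset.card_range], k + i, hki,
    (isDownStep_ofSupport hS _).2 (by simp; omega), ?_, rfl⟩
  convert Set.ncard_Ico_nat k (k + i) using 2
  · ext j
    simp only [Set.mem_ofPred_eq, Set.mem_Ico, isDownStep_ofSupport hS, hgt_eq,
      Finset.card_range, Finset.mem_range]
    omega
  · omega

lemma exists_lexUp_of_le {k i : ℕ} (hk : k < n) (hik : i ≤ k) : ∃ x y, lexUp n k i x y := by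
  set S := (Finset.range (k + 1)).erase (k - i)
  have hS : ∀ t ∈ S, t < n := fun t ht => by simp [S] at ht; omega
  have hcard : S.card = k := by
    rw [Finset.card_erase_of_mem (by simp), Finset.card_range, Nat.add_sub_cancel]
  have hgt_gap : hgt (ofSupport n S) (k - i) = k - i := by
    rw [hgt, onesUpTo_ofSupport hS, show S.filter (· < k - i) = Finset.range (k - i) by
      ext t; simp only [S, Finset.mem_filter, Finset.mem_erase, Finset.mem_range]; omega,
      Finset.card_range]
    push_cast [hik]
    ring
  have hgt_tail {j : ℕ} (hj : k < j) : hgt (ofSupport n S) j = 2 * k - j := by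
    rw [hgt, onesUpTo_ofSupport hS, Finset.filter_true_of_mem fun t ht => by simp [S] at ht; omega,
      hcard]
  refine ⟨_, _, by rw [wt_ofSupport hS, hcard], k - i, by omega,
    (isDownStep_ofSupport hS _).2 (by simp [S]; omega), ?_, rfl⟩
  convert Set.ncard_Ico_nat (k + 1) (k + i + 1) using 2
  · ext j
    simp only [Set.mem_ofPred_eq, Set.mem_Ico, isDownStep_ofSupport hS, hcard, hgt_gap]
    rcases le_or_gt j k with hjk | hjk
    · have : j ∉ S ↔ j = k - i := by simp [S]; omega
      rw [this]
      constructor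
      · rintro ⟨⟨-, rfl⟩, h⟩
        rw [hgt_gap] at h
        omega
      · omega
    · have : j ∉ S := by simp [S]; omega
      simp only [this, not_false_eq_true, and_true, hgt_tail hjk]
      omega
  · omega

lemma exists_lexUp {k i : ℕ} (hk : k < n) (hi : i ≤ max k (n - k - 1)) :
    ∃ x y, lexUp n k i x y := by
  rcases le_or_gt i k with hik | hki
  · exact exists_lexUp_of_le hk hik
  · exact exists_lexUp_of_add_lt (by omega)

end Lexical

theorem lexical_unions_disjoint_iff_general (n : ℕ) (iv jv : Fin n → ℕ)
    (hbi : ∀ k : Fin n, iv k ≤ max k.val (n - k.val - 1)) :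
    Disjoint
      {e : Sym2 (Fin n → Bool) |
        ∃ (k : Fin n) (x y : Fin n → Bool), lexUp n k.val (iv k) x y ∧ e = s(x, y)}
      {e : Sym2 (Fin n → Bool) |
        ∃ (k : Fin n) (x y : Fin n → Bool), lexUp n k.val (jv k) x y ∧ e = s(x, y)}
    ↔ ∀ k : Fin n, iv k ≠ jv k := by
  rw [Set.disjoint_left]
  constructor
  · intro hdisj k hij
    obtain ⟨x, y, hxy⟩ := exists_lexUp k.isLt (hbi k)
    exact hdisj ⟨k, x, y, hxy, rfl⟩ ⟨k, x, y, hij ▸ hxy, rfl⟩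
  · rintro hne e ⟨k, x, y, hxy, rfl⟩ ⟨k', x', y', hxy', he⟩
    rcases Sym2.eq_iff.mp he with ⟨rfl, rfl⟩ | ⟨rfl, rfl⟩
    · obtain ⟨hk, hi⟩ := lexUp_unique hxy hxy'
      obtain rfl : k = k' := Fin.ext hk
      exact hne k hi
    · exact lexUp_asymm hxy hxy'

/-- For sequences `i` and `j` with `0 ≤ i_k, j_k ≤ max{k, n−k−1}`, the edge sets
`⋃_{k=0}^{n−1} M^{i_k}_{n,k}` and `⋃_{k=0}^{n−1} M^{j_k}_{n,k}` are disjoint if and only if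
`i_k ≠ j_k` for every `k`. -/
theorem lexical_unions_disjoint_iff (n : ℕ) (hn : 1 ≤ n) (iv jv : Fin n → ℕ)
    (hbi : ∀ k : Fin n, iv k ≤ max k.val (n - k.val - 1))
    (hbj : ∀ k : Fin n, jv k ≤ max k.val (n - k.val - 1)) :
    Disjoint
      {e : Sym2 (Fin n → Bool) |
        ∃ (k : Fin n) (x y : Fin n → Bool), lexUp n k.val (iv k) x y ∧ e = s(x, y)}
      {e : Sym2 (Fin n → Bool) |
        ∃ (k : Fin n) (x y : Fin n → Bool), lexUp n k.val (jv k) x y ∧ e = s(x, y)}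
    ↔ ∀ k : Fin n, iv k ≠ jv k :=
  lexical_unions_disjoint_iff_general n iv jv hbi
end
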